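/- arXiv:1701.00585 — 6 statements merged into one kernel-verified Lean document; each statement's English description precedes it below -/
import Mathlib

section
/- Let p be a prime, and let K = {k₁,...,k_r} and L = {l₁,...,l_s} be disjoint subsets of {0,1,...,p-1}. Suppose 𝒜 is a family of subsets of {1,...,n} such that |A| mod p ∈ K for all A ∈ 𝒜, and |A ∩ B| mod p ∈ L for all distinct A, B ∈ 𝒜. If n ≥ 2s - 2r + 1, then |𝒜| ≤ C(n-1,s) + C(n-1,s-1) + ... + C(n-1,s-2r+1). -/
/-!
Read functions on subsets of `X = {1, …, n-1}` as multilinear polynomials evaluated at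
characteristic vectors; those of degree `≤ s` span a space of dimension `∑_{j ≤ s} C(n-1, j)`.
The polynomials `∏_{l ∈ L} (|(A ∖ {n}) ∩ S| + [n ∈ A] - l)`, `A ∈ 𝒜`, are triangular with respect
to the points `A ∖ {n}` (the one of `A` vanishes at `B ∖ {n}` unless `B = A` or `n ∈ A ∖ B`), and
they stay linearly independent when joined by the `x_U · ∏_{k ∈ K} (|S| - k)(|S| + 1 - k)` with
`|U| ≤ s - 2r`, which vanish at all these points. The latter independence is an uncertainty
principle: a combination of monomials of degree `≤ c` whose subset sums vanish whenever `|S| mod p`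
avoids a set `B` of residues is trivial if `2c + |B| ≤ |X|` and `|B| + c < p`. By induction on `c`
(comparing shifts by two points `x, y`) it reduces to functions of `|U|` alone, whose subset sums
form a polynomial of degree `≤ c` in `|S|` with more than `c` roots.
-/

open Finset Module Polynomial

section Triangular

variable {ι κ Y F : Type*} [Field F] [Fintype ι]

theorem eq_zero_of_sum_mul_eval_eq_zero (f : ι → Y → F) (x : ι → Y) (w : ι → ℕ)
    (hdiag : ∀ i, f i (x i) ≠ 0) (hoff : ∀ i j, i ≠ j → f i (x j) ≠ 0 → w i < w j)
    (g : ι → F) (hg : ∀ j, ∑ i, g i * f i (x j) = 0) (j : ι) : g j = 0 := by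
  induction hw : w j using Nat.strong_induction_on generalizing j with
  | _ m ih =>
    have hj := hg j
    rw [sum_eq_single j (fun i _ hij => ?_) (by simp)] at hj
    · exact (mul_eq_zero.1 hj).resolve_right (hdiag j)
    by_cases hfi : f i (x j) = 0
    · rw [hfi, mul_zero]
    · rw [ih (w i) (hw ▸ hoff i j hij hfi) i rfl, zero_mul]

theorem linearIndependent_sumElim_of_triangular [Fintype κ] (f : ι → Y → F) (h : κ → Y → F)
    (x : ι → Y) (w : ι → ℕ) (hdiag : ∀ i, f i (x i) ≠ 0)
    (hoff : ∀ i j, i ≠ j → f i (x j) ≠ 0 → w i < w j) (hvan : ∀ k i, h k (x i) = 0)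
    (hh : LinearIndependent F h) : LinearIndependent F (Sum.elim f h) := by
  rw [Fintype.linearIndependent_iff] at hh ⊢
  intro g hg
  simp only [Fintype.sum_sum_type, Sum.elim_inl, Sum.elim_inr] at hg
  have hf : ∀ i, g (.inl i) = 0 := by
    refine eq_zero_of_sum_mul_eval_eq_zero f x w hdiag hoff _ fun j => ?_
    simpa [hvan] using congrFun hg (x j)
  have hk : ∀ k, g (.inr k) = 0 := hh _ (by simpa [hf] using hg)
  rintro (i | k)
  exacts [hf i, hk k]

end Triangular

theorem LinearIndependent.card_le_finrank_of_mem {R M ι : Type*} [Field R] [AddCommGroup M]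
    [Module R M] [Fintype ι] {v : ι → M} (hv : LinearIndependent R v) {N : Submodule R M}
    [FiniteDimensional R N] (hN : ∀ i, v i ∈ N) : Fintype.card ι ≤ Module.finrank R N :=
  (LinearIndependent.of_comp N.subtype (v := fun i => (⟨v i, hN i⟩ : N)) hv).fintype_card_le_finrank

section Counting

variable {α : Type*}

theorem card_filter_card_add_le_eq (X : Finset α) (s t : ℕ) :
    (X.powerset.filter (·.card + t ≤ s)).card =
      (X.powerset.filter (·.card + (t + 1) ≤ s)).card +
        if t ≤ s then X.card.choose (s - t) else 0 := by
  rw [← card_filter_add_card_filter_not (s := X.powerset.filter (·.card + t ≤ s))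
    (fun T => T.card + (t + 1) ≤ s), filter_filter, filter_filter]
  congr 2
  · ext T
    simp only [mem_filter]
    exact and_congr_right fun _ => by omega
  split_ifs with h
  · rw [← card_powersetCard, powersetCard_eq_filter]
    congr 1
    ext T
    simp only [mem_filter]
    exact and_congr_right fun _ => by omega
  · exact card_eq_zero.2 (filter_eq_empty_iff.2 fun T _ => by omega)

theorem card_filter_card_le_eq (X : Finset α) (s t : ℕ) :
    (X.powerset.filter (·.card ≤ s)).card = (X.powerset.filter (·.card + t ≤ s)).card +
      ∑ j ∈ range t, if j ≤ s then X.card.choose (s - j) else 0 := by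
  induction t with
  | zero => simp
  | succ t ih =>
    rw [ih, card_filter_card_add_le_eq, sum_range_succ, add_assoc, add_comm (ite _ _ _)]

end Counting

variable {α : Type*} [DecidableEq α]

section LowDegree

variable (F : Type*) [Field F]

-- The monomial `∏_{t ∈ T} x_t` at the characteristic vector of `S`.
def setMonomial (T : Finset α) : Finset α → F := fun S => if T ⊆ S then 1 else 0

def lowDegree (X : Finset α) (d : ℕ) : Submodule F (Finset α → F) :=
  Submodule.span F (Set.range fun T : X.powerset.filter (·.card ≤ d) => setMonomial F T)

variable {F} {X : Finset α}

instance (d : ℕ) : FiniteDimensional F (lowDegree F X d) :=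
  FiniteDimensional.span_of_finite F (Set.finite_range _)

theorem finrank_lowDegree_le (d : ℕ) :
    finrank F (lowDegree F X d) ≤ (X.powerset.filter (·.card ≤ d)).card :=
  (finrank_range_le_card _).trans (Fintype.card_coe _).le

theorem setMonomial_mem_lowDegree {T : Finset α} {d : ℕ} (hT : T ⊆ X) (hd : T.card ≤ d) :
    setMonomial F T ∈ lowDegree F X d :=
  Submodule.subset_span ⟨⟨T, by simp [hT, hd]⟩, rfl⟩

theorem lowDegree_mono {d e : ℕ} (h : d ≤ e) : lowDegree F X d ≤ lowDegree F X e :=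
  Submodule.span_le.2 <| Set.range_subset_iff.2 fun ⟨T, hT⟩ => by
    simp only [mem_filter, mem_powerset] at hT
    exact setMonomial_mem_lowDegree hT.1 (hT.2.trans h)

theorem setMonomial_mul (T T' : Finset α) :
    setMonomial F T * setMonomial F T' = setMonomial F (T ∪ T') := by
  ext S
  by_cases hT : T ⊆ S <;> by_cases hT' : T' ⊆ S <;> simp [setMonomial, union_subset_iff, hT, hT']

theorem mul_mem_lowDegree {f g : Finset α → F} {d e : ℕ} (hf : f ∈ lowDegree F X d)
    (hg : g ∈ lowDegree F X e) : f * g ∈ lowDegree F X (d + e) := by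
  have hfg := Submodule.mul_mem_mul hf hg
  rw [lowDegree, lowDegree, Submodule.span_mul_span] at hfg
  refine Submodule.span_le.2 ?_ hfg
  rintro _ ⟨_, ⟨⟨T, hT⟩, rfl⟩, _, ⟨⟨T', hT'⟩, rfl⟩, rfl⟩
  simp only [mem_filter, mem_powerset] at hT hT'
  obtain ⟨hTX, hTd⟩ := hT
  obtain ⟨hTX', hTe⟩ := hT'
  dsimp only
  rw [setMonomial_mul]
  exact setMonomial_mem_lowDegree (union_subset hTX hTX') ((card_union_le T T').trans (by omega))

theorem const_mem_lowDegree (c : F) (d : ℕ) : (fun _ => c) ∈ lowDegree F X d := by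
  have : (fun _ => c) = c • setMonomial F (∅ : Finset α) := by ext; simp [setMonomial]
  rw [this]
  exact Submodule.smul_mem _ _ (setMonomial_mem_lowDegree (empty_subset X) (Nat.zero_le d))

theorem card_inter_add_const_mem_lowDegree {W : Finset α} (hW : W ⊆ X) (c : F) :
    (fun S => ((W ∩ S).card : F) + c) ∈ lowDegree F X 1 := by
  have : (fun S => ((W ∩ S).card : F)) = ∑ x ∈ W, setMonomial F {x} := by
    ext S
    simp [setMonomial, Finset.sum_apply]
  refine Submodule.add_mem _ ?_ (const_mem_lowDegree c 1)
  rw [this]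
  exact Submodule.sum_mem _ fun x hx => setMonomial_mem_lowDegree (by simpa using hW hx) (by simp)

theorem prod_mem_lowDegree {ι : Type*} (Λ : Finset ι) (f : ι → Finset α → F)
    (hf : ∀ i ∈ Λ, f i ∈ lowDegree F X 1) : ∏ i ∈ Λ, f i ∈ lowDegree F X Λ.card := by
  classical
  induction Λ using Finset.induction_on with
  | empty => exact const_mem_lowDegree (X := X) (1 : F) 0
  | insert i Λ hi ih =>
    rw [prod_insert hi, card_insert_of_notMem hi, add_comm]
    exact mul_mem_lowDegree (hf i (mem_insert_self i Λ))
      (ih fun j hj => hf j (mem_insert_of_mem hj))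

end LowDegree

section Uncertainty

theorem eq_of_card_eq_of_exchange {β : Type*} (a : Finset α → β) (X : Finset α) (c : ℕ)
    (hex : ∀ x ∈ X, ∀ y ∈ X, ∀ U ⊆ X, x ∉ U → y ∉ U → U.card < c →
      a (insert x U) = a (insert y U))
    {V W : Finset α} (hV : V ⊆ X) (hW : W ⊆ X) (hVW : V.card = W.card) (hc : V.card ≤ c) :
    a V = a W := by
  induction hk : (V \ W).card generalizing V with
  | zero =>
    rw [eq_of_subset_of_card_le (sdiff_eq_empty_iff_subset.1 (card_eq_zero.1 hk)) hVW.ge]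
  | succ k ih =>
    obtain ⟨v, hv⟩ : (V \ W).Nonempty := card_pos.1 (by omega)
    obtain ⟨w, hw⟩ : (W \ V).Nonempty := card_pos.1 (by rw [← card_sdiff_comm hVW]; omega)
    rw [mem_sdiff] at hv hw
    have hvV : insert v (V.erase v) = V := insert_erase hv.1
    have hwV : w ∉ V.erase v := fun h => hw.2 (mem_of_mem_erase h)
    have hcard : (V.erase v).card + 1 = V.card := card_erase_add_one hv.1
    rw [← hvV, hex v (hV hv.1) w (hW hw.1) _ ((erase_subset v V).trans hV) (notMem_erase v V)
      hwV (by omega)]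
    refine ih (insert_subset (hW hw.1) ((erase_subset v V).trans hV)) ?_ ?_ ?_
    · rw [card_insert_of_notMem hwV]; omega
    · rw [card_insert_of_notMem hwV]; omega
    · have : insert w (V.erase v) \ W = (V \ W).erase v := by
        ext u
        simp only [mem_sdiff, mem_insert, mem_erase]
        constructor
        · rintro ⟨rfl | ⟨hu, huV⟩, huW⟩
          exacts [absurd hw.1 huW, ⟨hu, huV, huW⟩]
        · rintro ⟨hu, huV, huW⟩
          exact ⟨Or.inr ⟨hu, huV⟩, huW⟩
      rw [this, card_erase_of_mem (mem_sdiff.2 hv), hk, Nat.add_sub_cancel]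

variable {F : Type*} [Field F] {p : ℕ} [CharP F p]

theorem exists_natCast_notMem (B : Finset F) (c : ℕ) (hp : B.card + c < p) :
    ∃ G : Finset ℕ, (∀ y ∈ G, y ≤ B.card + c ∧ (y : F) ∉ B) ∧ c < G.card := by
  classical
  refine ⟨(range (B.card + c + 1)).filter fun y : ℕ => (y : F) ∉ B, fun y hy => ?_, ?_⟩
  · simp only [mem_filter, mem_range] at hy
    exact ⟨by omega, hy.2⟩
  have hbad : ((range (B.card + c + 1)).filter fun y : ℕ => (y : F) ∈ B).card ≤ B.card := by
    refine card_le_card_of_injOn Nat.cast (fun y hy => (mem_filter.1 hy).2) ?_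
    refine (CharP.natCast_injOn_Iio F p).mono fun y hy => ?_
    have := mem_range.1 (mem_filter.1 hy).1
    exact Set.mem_Iio.2 (by omega)
  have := card_filter_add_card_filter_not (s := range (B.card + c + 1)) (fun y : ℕ => (y : F) ∈ B)
  rw [card_range] at this
  omega

theorem eq_zero_of_sum_choose_mul_eq_zero (c : ℕ) (G : Finset ℕ) (hGp : ∀ y ∈ G, y < p)
    (hG : c < G.card) (g : ℕ → F)
    (h : ∀ y ∈ G, ∑ j ∈ range (c + 1), (y.choose j : F) * g j = 0) : ∀ j ≤ c, g j = 0 := by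
  classical
  have hcp : c < p := hG.trans_le ((card_le_card fun y hy => mem_range.2 (hGp y hy)).trans
    (card_range p).le)
  have hprime : p.Prime := (CharP.char_is_prime_or_zero F p).resolve_right (by omega)
  have hfact : ∀ j ≤ c, (j.factorial : F) ≠ 0 := fun j hj => by
    rw [Ne, CharP.cast_eq_zero_iff F p, hprime.dvd_factorial]
    omega
  let S : Sequence F := ⟨fun j => descPochhammer F j, fun j => by
    rw [degree_eq_natDegree (monic_descPochhammer F j).ne_zero, descPochhammer_natDegree]⟩
  set P := ∑ j ∈ range (c + 1), (g j / j.factorial) • descPochhammer F j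
  have hroot : ∀ y ∈ G, P.eval (y : F) = 0 := fun y hy => by
    rw [← h y hy, eval_finsetSum]
    refine sum_congr rfl fun j hj => ?_
    rw [eval_smul, descPochhammer_eval_eq_descFactorial, Nat.descFactorial_eq_factorial_mul_choose,
      smul_eq_mul, Nat.cast_mul]
    field_simp [hfact j (Nat.lt_succ_iff.1 (mem_range.1 hj))]
  have hP : P = 0 := by
    refine eq_zero_of_natDegree_lt_card_of_eval_eq_zero' P (G.image Nat.cast) ?_ ?_
    · simpa using hroot
    · rw [card_image_of_injOn ((CharP.natCast_injOn_Iio F p).mono fun y hy => hGp y hy)]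
      refine lt_of_le_of_lt (natDegree_sum_le_of_forall_le _ _ fun j hj => ?_) hG
      exact (natDegree_smul_le _ _).trans
        ((descPochhammer_natDegree F j).trans_le (Nat.lt_succ_iff.1 (mem_range.1 hj)))
  intro j hj
  have := linearIndependent_iff'.1 S.linearIndependent (range (c + 1))
    (fun j => g j / j.factorial) hP j (mem_range.2 (Nat.lt_succ_of_le hj))
  simpa [hfact j hj] using this

theorem sum_range_choose_mul_eq {R : Type*} [Semiring R] (g : ℕ → R) {c : ℕ}
    (hg : ∀ j, c < j → g j = 0) (y : ℕ) :
    ∑ j ∈ range (y + 1), (y.choose j : R) * g j = ∑ j ∈ range (c + 1), (y.choose j : R) * g j := by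
  have hext : ∀ m, y ≤ m → c ≤ m →
      ∑ j ∈ range (m + 1), (y.choose j : R) * g j = ∑ j ∈ range (c + 1), (y.choose j : R) * g j :=
    fun m _ hc => (sum_subset (range_subset_range.2 (by omega)) fun j _ hj => by
      rw [hg j (by simpa using hj), mul_zero]).symm
  rw [← hext (max y c) (le_max_left y c) (le_max_right y c)]
  exact sum_subset (range_subset_range.2 (by omega)) fun j _ hj => by
    rw [Nat.choose_eq_zero_of_lt (by simpa using hj), Nat.cast_zero, zero_mul]

theorem eq_zero_of_exchange (c : ℕ) (X : Finset α) (B : Finset F) (a : Finset α → F)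
    (hex : ∀ x ∈ X, ∀ y ∈ X, ∀ U ⊆ X, x ∉ U → y ∉ U → U.card < c →
      a (insert x U) = a (insert y U))
    (hdeg : ∀ U ⊆ X, c < U.card → a U = 0)
    (hsum : ∀ S ⊆ X, (S.card : F) ∉ B → ∑ U ∈ S.powerset, a U = 0)
    (hX : c + B.card ≤ X.card) (hp : B.card + c < p) : ∀ U ⊆ X, a U = 0 := by
  choose! V hVX hV using fun j (hj : j ≤ X.card) => exists_subset_card_eq hj
  set g : ℕ → F := fun j => if j ≤ c then a (V j) else 0
  have hag : ∀ U ⊆ X, a U = g U.card := fun U hU => by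
    by_cases hc : U.card ≤ c
    · simp only [g, if_pos hc]
      exact eq_of_card_eq_of_exchange a X c hex hU (hVX _ (card_le_card hU))
        (hV _ (card_le_card hU)).symm hc
    · simp only [g, if_neg hc]
      exact hdeg U hU (by omega)
  have hg : ∀ j, c < j → g j = 0 := fun j hj => if_neg (by omega)
  obtain ⟨G, hG, hGc⟩ := exists_natCast_notMem B c hp
  have hzero := eq_zero_of_sum_choose_mul_eq_zero c G (fun y hy => by have := hG y hy; omega)
    hGc g fun y hy => by
      have hyX : y ≤ X.card := by have := hG y hy; omega
      have := hsum (V y) (hVX y hyX) (by rw [hV y hyX]; exact (hG y hy).2)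
      rwa [sum_congr rfl fun U hU => hag U ((mem_powerset.1 hU).trans (hVX y hyX)),
        sum_powerset_apply_card, hV y hyX, sum_congr rfl fun j _ => nsmul_eq_mul _ _,
        sum_range_choose_mul_eq g hg] at this
  intro U hU
  rw [hag U hU]
  by_cases hc : U.card ≤ c
  exacts [hzero _ hc, hg _ (by omega)]

theorem sum_powerset_insert_sub_insert_eq_zero [DecidableEq F] {B : Finset F}
    {a : Finset α → F} {X S : Finset α}
    (hsum : ∀ S ⊆ X, (S.card : F) ∉ B → ∑ U ∈ S.powerset, a U = 0) {x y : α} (hx : x ∈ X)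
    (hy : y ∈ X) (hS : S ⊆ X) (hxS : x ∉ S) (hyS : y ∉ S) (hSB : (S.card : F) ∉ B.image (· - 1)) :
    ∑ U ∈ S.powerset, (a (insert x U) - a (insert y U)) = 0 := by
  have hins : ∀ z ∈ X, z ∉ S → ∑ U ∈ S.powerset, a (insert z U) = -∑ U ∈ S.powerset, a U :=
    fun z hz hzS => by
      have := hsum _ (insert_subset hz hS) fun h => hSB <| mem_image.2
        ⟨_, h, by rw [card_insert_of_notMem hzS]; push_cast; ring⟩
      rw [sum_powerset_insert hzS] at this
      exact eq_neg_of_add_eq_zero_right this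
  rw [sum_sub_distrib, hins x hx hxS, hins y hy hyS, sub_self]

theorem eq_zero_of_sum_powerset_eq_zero (c : ℕ) (X : Finset α) (B : Finset F)
    (a : Finset α → F) (hdeg : ∀ U ⊆ X, c < U.card → a U = 0)
    (hsum : ∀ S ⊆ X, (S.card : F) ∉ B → ∑ U ∈ S.powerset, a U = 0)
    (hX : 2 * c + B.card ≤ X.card) (hp : B.card + c < p) : ∀ U ⊆ X, a U = 0 := by
  classical
  induction c generalizing X B a with
  | zero =>
    exact eq_zero_of_exchange 0 X B a (fun _ _ _ _ _ _ _ _ h => absurd h (Nat.not_lt_zero _))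
      hdeg hsum (by omega) hp
  | succ c ih =>
    refine eq_zero_of_exchange (c + 1) X B a (fun x hx y hy U hU hxU hyU hUc => ?_) hdeg hsum
      (by omega) hp
    obtain rfl | hxy := eq_or_ne x y
    · rfl
    -- `W ↦ a (insert x W) - a (insert y W)` on `X ∖ {x, y}` satisfies the hypotheses for `c`
    -- and the residues `B - 1`, since `|insert x S| = |S| + 1`.
    set X' := (X.erase x).erase y
    have hX'X : X' ⊆ X := (erase_subset _ _).trans (erase_subset _ _)
    have hxX' : x ∉ X' := fun h => notMem_erase x X (mem_of_mem_erase h)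
    have hyX' : y ∉ X' := notMem_erase y _
    have hX' : X'.card + 2 = X.card := by
      rw [card_erase_of_mem (mem_erase.2 ⟨hxy.symm, hy⟩), card_erase_of_mem hx]
      have : 1 < X.card := one_lt_card.2 ⟨x, hx, y, hy, hxy⟩
      omega
    have hB : (B.image (· - 1)).card ≤ B.card := card_image_le
    refine sub_eq_zero.1 (ih X' (B.image (· - 1)) (fun W => a (insert x W) - a (insert y W))
      (fun W hW hWc => ?_) (fun S hS hSB => sum_powerset_insert_sub_insert_eq_zero hsum hx hy
        (hS.trans hX'X) (fun h => hxX' (hS h)) (fun h => hyX' (hS h)) hSB)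
      (by omega) (by omega) U fun u hu => ?_)
    · have hins : ∀ z ∈ X, z ∉ W → a (insert z W) = 0 := fun z hz hzW =>
        hdeg _ (insert_subset hz (hW.trans hX'X)) (by rw [card_insert_of_notMem hzW]; omega)
      rw [hins x hx fun h => hxX' (hW h), hins y hy fun h => hyX' (hW h), sub_zero]
    · exact mem_erase.2 ⟨fun h => hyU (h ▸ hu), mem_erase.2 ⟨fun h => hxU (h ▸ hu), hU hu⟩⟩

theorem linearIndepOn_setMonomial_mul (c : ℕ) (X : Finset α) (B : Finset F) (Z : Finset α → F)
    (hZ : ∀ S ⊆ X, (S.card : F) ∉ B → Z S ≠ 0) (hX : 2 * c + B.card ≤ X.card)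
    (hp : B.card + c < p) :
    LinearIndepOn F (fun U => setMonomial F U * Z) {U | U ⊆ X ∧ U.card ≤ c} := by
  classical
  rw [linearIndepOn_iff']
  intro t g ht hg
  have hzero := eq_zero_of_sum_powerset_eq_zero c X B (fun U => if U ∈ t then g U else 0)
    (fun U _ hU => if_neg fun h => by have := (ht h).2; omega) (fun S hS hSB => ?_) hX hp
  · exact fun U hU => by simpa [hU] using hzero U (ht hU).1
  have hS' := congrFun hg S
  simp only [Finset.sum_apply, Pi.smul_apply, Pi.mul_apply, smul_eq_mul, setMonomial,
    Pi.zero_apply, ← mul_assoc, ← sum_mul, mul_ite, mul_one, mul_zero] at hS'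
  rw [sum_ite_mem, ← (mul_eq_zero.1 hS').resolve_right (hZ S hS hSB), ← sum_filter]
  congr 1
  ext U
  simp [and_comm]

end Uncertainty

section ModP

theorem natCast_card_erase_add_ite {R : Type*} [AddMonoidWithOne R] (A : Finset α) (z : α) :
    ((A.erase z).card : R) + (if z ∈ A then 1 else 0) = A.card := by
  split_ifs with h
  · rw [← Nat.cast_add_one, card_erase_add_one h]
  · rw [erase_eq_of_notMem h, add_zero]

variable {p : ℕ} [Fact p.Prime]

def memberPoly (L : Finset (ZMod p)) (z : α) (A : Finset α) : Finset α → ZMod p :=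
  ∏ l ∈ L, fun S => ((A.erase z ∩ S).card : ZMod p) + ((if z ∈ A then 1 else 0) - l)

def sizePoly (K : Finset (ZMod p)) (X : Finset α) : Finset α → ZMod p :=
  (∏ k ∈ K, fun S => ((X ∩ S).card : ZMod p) + -k) *
    ∏ k ∈ K, fun S => ((X ∩ S).card : ZMod p) + (1 - k)

variable {K L : Finset (ZMod p)} {X : Finset α} {z : α}

theorem memberPoly_mem_lowDegree {A : Finset α} (hA : A.erase z ⊆ X) :
    memberPoly L z A ∈ lowDegree (ZMod p) X L.card :=
  prod_mem_lowDegree L _ fun _ _ => card_inter_add_const_mem_lowDegree hA _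

theorem memberPoly_erase_self_ne_zero {A : Finset α} (hA : (A.card : ZMod p) ∉ L) :
    memberPoly L z A (A.erase z) ≠ 0 := by
  simp only [memberPoly, prod_apply, inter_self, ← add_sub_assoc, natCast_card_erase_add_ite]
  exact prod_ne_zero_iff.2 fun l hl => sub_ne_zero.2 fun h => hA (h ▸ hl)

theorem memberPoly_erase_eq_zero {A B : Finset α} (hAB : ((A ∩ B).card : ZMod p) ∈ L)
    (hz : z ∈ B ∨ z ∉ A) : memberPoly L z A (B.erase z) = 0 := by
  have hinter : A.erase z ∩ B.erase z = (A ∩ B).erase z := by ext; simp; tauto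
  have hmem : (z ∈ A) ↔ z ∈ A ∩ B := by rw [mem_inter]; tauto
  simp only [memberPoly, prod_apply, hinter, ← add_sub_assoc, hmem, natCast_card_erase_add_ite]
  exact prod_eq_zero hAB (sub_self _)

theorem sizePoly_mem_lowDegree : sizePoly K X ∈ lowDegree (ZMod p) X (2 * K.card) := by
  rw [two_mul]
  exact mul_mem_lowDegree
    (prod_mem_lowDegree K _ fun _ _ => card_inter_add_const_mem_lowDegree subset_rfl _)
    (prod_mem_lowDegree K _ fun _ _ => card_inter_add_const_mem_lowDegree subset_rfl _)

theorem sizePoly_apply {S : Finset α} (hS : S ⊆ X) :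
    sizePoly K X S = (∏ k ∈ K, ((S.card : ZMod p) - k)) * ∏ k ∈ K, ((S.card : ZMod p) + 1 - k) := by
  simp only [sizePoly, Pi.mul_apply, prod_apply, inter_eq_right.2 hS, sub_eq_add_neg, add_assoc]

theorem sizePoly_erase_eq_zero {B : Finset α} (hB : B.erase z ⊆ X)
    (hBK : (B.card : ZMod p) ∈ K) : sizePoly K X (B.erase z) = 0 := by
  rw [sizePoly_apply hB]
  rw [← natCast_card_erase_add_ite B z] at hBK
  split_ifs at hBK
  · exact mul_eq_zero_of_right _ (prod_eq_zero hBK (sub_self _))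
  · exact mul_eq_zero_of_left (prod_eq_zero hBK (by rw [add_zero, sub_self])) _

theorem sizePoly_ne_zero {S : Finset α} (hS : S ⊆ X)
    (hSK : (S.card : ZMod p) ∉ K ∪ K.image (· - 1)) : sizePoly K X S ≠ 0 := by
  rw [sizePoly_apply hS]
  refine mul_ne_zero (prod_ne_zero_iff.2 fun k hk => sub_ne_zero.2 fun h => ?_)
    (prod_ne_zero_iff.2 fun k hk => sub_ne_zero.2 fun h => ?_)
  · exact hSK (mem_union_left _ (h ▸ hk))
  · exact hSK (mem_union_right _ (mem_image.2 ⟨k, hk, by rw [← h, add_sub_cancel_right]⟩))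

theorem linearIndepOn_setMonomial_mul_sizePoly {s : ℕ} (hX : 2 * s ≤ X.card + 2 * K.card)
    (hs : s < p) :
    LinearIndepOn (ZMod p) (fun U => setMonomial (ZMod p) U * sizePoly K X)
      ↑(X.powerset.filter (·.card + 2 * K.card ≤ s)) := by
  rcases le_or_gt (2 * K.card) s with h | h
  · have hB : (K ∪ K.image (· - 1)).card ≤ 2 * K.card :=
      (card_union_le _ _).trans (by rw [two_mul]; exact Nat.add_le_add_left card_image_le _)
    refine (linearIndepOn_setMonomial_mul (s - 2 * K.card) X _ _
      (fun S hS => sizePoly_ne_zero hS) (by omega) (by omega)).mono fun U hU => ?_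
    simp only [coe_filter, mem_powerset, Set.mem_ofPred_eq] at hU
    exact ⟨hU.1, by omega⟩
  · refine (linearIndepOn_empty _ _).mono fun U hU => ?_
    simp only [coe_filter, mem_powerset, Set.mem_ofPred_eq] at hU
    omega

theorem linearIndependent_sumElim_memberPoly (hKL : Disjoint K L) (𝒜 : Finset (Finset α))
    (herase : ∀ A ∈ 𝒜, A.erase z ⊆ X) (hsize : ∀ A ∈ 𝒜, (A.card : ZMod p) ∈ K)
    (hint : ∀ A ∈ 𝒜, ∀ B ∈ 𝒜, A ≠ B → ((A ∩ B).card : ZMod p) ∈ L)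
    (hX : 2 * L.card ≤ X.card + 2 * K.card) (hs : L.card < p) :
    LinearIndependent (ZMod p) (Sum.elim (fun A : 𝒜 => memberPoly L z A)
      fun U : X.powerset.filter (·.card + 2 * K.card ≤ L.card) =>
        setMonomial (ZMod p) U * sizePoly K X) := by
  refine linearIndependent_sumElim_of_triangular _ _ (fun A => A.1.erase z)
    (fun A => if z ∈ A.1 then 0 else 1)
    (fun A => memberPoly_erase_self_ne_zero (disjoint_left.1 hKL (hsize A A.2)))
    (fun A B hAB h => ?_) (fun U B => ?_) (linearIndepOn_setMonomial_mul_sizePoly hX hs)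
  · by_contra hw
    exact h (memberPoly_erase_eq_zero (hint A A.2 B B.2 (Subtype.coe_ne_coe.2 hAB))
      (by split_ifs at hw <;> tauto))
  · exact mul_eq_zero_of_right _ (sizePoly_erase_eq_zero (herase B B.2) (hsize B B.2))

theorem card_add_card_le_card_powerset_filter (K L : Finset (ZMod p)) (hKL : Disjoint K L)
    (X : Finset α) (z : α) (𝒜 : Finset (Finset α)) (h𝒜 : ∀ A ∈ 𝒜, A ⊆ insert z X)
    (hsize : ∀ A ∈ 𝒜, (A.card : ZMod p) ∈ K)
    (hint : ∀ A ∈ 𝒜, ∀ B ∈ 𝒜, A ≠ B → ((A ∩ B).card : ZMod p) ∈ L)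
    (hX : 2 * L.card ≤ X.card + 2 * K.card) :
    𝒜.card + (X.powerset.filter (·.card + 2 * K.card ≤ L.card)).card ≤
      (X.powerset.filter (·.card ≤ L.card)).card := by
  obtain rfl | ⟨A₀, hA₀⟩ := 𝒜.eq_empty_or_nonempty
  · simpa using card_le_card fun T hT => by
      simp only [mem_filter] at hT ⊢
      exact ⟨hT.1, by omega⟩
  have hs : L.card < p := by
    have := card_le_univ (K ∪ L)
    rw [card_union_of_disjoint hKL, ZMod.card] at this
    have := card_pos.2 ⟨_, hsize A₀ hA₀⟩
    omega
  have herase : ∀ A ∈ 𝒜, A.erase z ⊆ X := fun A hA u hu =>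
    (mem_insert.1 (h𝒜 A hA (mem_of_mem_erase hu))).resolve_left (ne_of_mem_erase hu)
  have hmem : ∀ i, Sum.elim (fun A : 𝒜 => memberPoly L z A)
      (fun U : X.powerset.filter (·.card + 2 * K.card ≤ L.card) =>
        setMonomial (ZMod p) U * sizePoly K X) i ∈ lowDegree (ZMod p) X L.card := by
    rintro (A | U)
    · exact memberPoly_mem_lowDegree (herase A A.2)
    · have hU := mem_filter.1 U.2
      exact lowDegree_mono hU.2 (mul_mem_lowDegree
        (setMonomial_mem_lowDegree (mem_powerset.1 hU.1) le_rfl) sizePoly_mem_lowDegree)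
  have := (linearIndependent_sumElim_memberPoly hKL 𝒜 herase hsize hint hX hs).card_le_finrank_of_mem
    hmem
  rw [Fintype.card_sum, Fintype.card_coe, Fintype.card_coe] at this
  exact this.trans (finrank_lowDegree_le _)

end ModP

/-- If `n ≥ 2s - 2r + 1`, a mod-`p` `L`-intersecting family with sizes mod `p` in `K`
(`K`, `L` disjoint subsets of `{0,…,p-1}`) has at most
`C(n-1,s) + C(n-1,s-1) + ⋯ + C(n-1,s-2r+1)` members. -/
theorem stmt0 (p n r s : ℕ) (hp : p.Prime) (K L : Finset ℕ)
    (hK : K ⊆ Finset.range p) (hL : L ⊆ Finset.range p) (hdisj : Disjoint K L)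
    (hKr : K.card = r) (hLs : L.card = s)
    (𝒜 : Finset (Finset ℕ)) (hsub : ∀ A ∈ 𝒜, A ⊆ Finset.Icc 1 n)
    (hsize : ∀ A ∈ 𝒜, A.card % p ∈ K)
    (hint : ∀ A ∈ 𝒜, ∀ B ∈ 𝒜, A ≠ B → (A ∩ B).card % p ∈ L)
    (hn : (n : ℤ) ≥ 2 * s - 2 * r + 1) :
    𝒜.card ≤ ∑ j ∈ Finset.range (2 * r),
      if j ≤ s then (n - 1).choose (s - j) else 0 := by
  have := Fact.mk hp
  have hinj : Set.InjOn (Nat.cast : ℕ → ZMod p) (range p) := by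
    rw [coe_range]; exact CharP.natCast_injOn_Iio (ZMod p) p
  have hdisj' : Disjoint (K.image (Nat.cast : ℕ → ZMod p)) (L.image Nat.cast) := by
    simp only [disjoint_left, mem_image, not_exists, not_and]
    rintro _ ⟨k, hk, rfl⟩ l hl hlk
    exact disjoint_left.1 hdisj hk (hinj (hL hl) (hK hk) hlk ▸ hl)
  have hcore := card_add_card_le_card_powerset_filter _ _ hdisj' (Icc 1 (n - 1)) n 𝒜
    (fun A hA a ha => by have := mem_Icc.1 (hsub A hA ha); simp only [mem_insert, mem_Icc]; omega)
    (fun A hA => mem_image.2 ⟨_, hsize A hA, ZMod.natCast_mod _ _⟩)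
    (fun A hA B hB hAB => mem_image.2 ⟨_, hint A hA B hB hAB, ZMod.natCast_mod _ _⟩)
  rw [card_image_of_injOn (hinj.mono hK), card_image_of_injOn (hinj.mono hL), hKr, hLs,
    Nat.card_Icc, Nat.add_sub_cancel] at hcore
  have := card_filter_card_le_eq (Icc 1 (n - 1)) s (2 * r)
  rw [Nat.card_Icc, Nat.add_sub_cancel] at this
  have := hcore (by omega)
  omega
end

section
/- For all integers n, c, k with 0 ≤ c < k ≤ n/2, the inequality C(n, k-1-c) + C(n, c) ≤ C(n, k) holds. -/
/-!
Write `k = a + c + 1`. By Pascal's rule, `C(m+1, a+1) + C(m+1, c+1)` splits into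
`(C(m, a) + C(m, c+1)) + (C(m, a+1) + C(m, c))`, two sums of the same shape for `m`, so by
induction it is at most `2 C(m, a+c+2) ≤ C(m, a+c+2) + C(m, a+c+3) = C(m+1, a+c+3)`, using that
`C(m, ·)` increases below `m / 2`. When `a = 0` or `c = 0` the claim is `1 + C(n, r) ≤ C(n, r+1)`,
the strict increase of `C(n, ·)` below `n / 2`.
-/

namespace Nat

theorem choose_le_choose_succ {n r : ℕ} (h : 2 * r + 1 ≤ n) :
    n.choose r ≤ n.choose (r + 1) := by
  refine Nat.le_of_mul_le_mul_right (c := r + 1) ?_ r.succ_pos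
  rw [choose_succ_right_eq]
  exact Nat.mul_le_mul_left _ (by omega)

theorem choose_lt_choose_succ {n r : ℕ} (h : 2 * r + 2 ≤ n) :
    n.choose r < n.choose (r + 1) := by
  refine Nat.lt_of_mul_lt_mul_right (a := r + 1) ?_
  rw [choose_succ_right_eq]
  exact Nat.mul_lt_mul_of_pos_left (by omega) (choose_pos (by omega))

theorem choose_add_choose_le_choose_add_add_one :
    ∀ {n a c : ℕ}, 2 * (a + c + 1) ≤ n → n.choose a + n.choose c ≤ n.choose (a + c + 1)
  | _, 0, _, h => by
    simpa [Nat.add_comm 1] using choose_lt_choose_succ (by omega)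
  | _, _ + 1, 0, h => by
    simpa using choose_lt_choose_succ (by omega)
  | 0, _ + 1, _ + 1, h => by omega
  | m + 1, a + 1, c + 1, h => by
    have hleft : m.choose a + m.choose (c + 1) ≤ m.choose (a + c + 2) :=
      choose_add_choose_le_choose_add_add_one (by omega)
    have hright : m.choose (a + 1) + m.choose c ≤ m.choose (a + c + 2) := by
      simpa only [Nat.add_right_comm a 1 c] using
        choose_add_choose_le_choose_add_add_one (n := m) (a := a + 1) (c := c) (by omega)
    calc (m + 1).choose (a + 1) + (m + 1).choose (c + 1)
        = (m.choose a + m.choose (c + 1)) + (m.choose (a + 1) + m.choose c) := by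
          rw [choose_succ_succ', choose_succ_succ']; ring
      _ ≤ m.choose (a + c + 2) + m.choose (a + c + 2) := Nat.add_le_add hleft hright
      _ ≤ m.choose (a + c + 2) + m.choose (a + c + 2 + 1) :=
          Nat.add_le_add_left (choose_le_choose_succ (by omega)) _
      _ = (m + 1).choose (a + 1 + (c + 1) + 1) := by
          rw [show a + 1 + (c + 1) + 1 = a + c + 2 + 1 by omega, choose_succ_succ']

end Nat

/-- Hwang–Kim inequality: for `0 ≤ c < k ≤ n/2`, `C(n,k-1-c) + C(n,c) ≤ C(n,k)`. -/
theorem stmt2 (n c k : ℕ) (hck : c < k) (hkn : 2 * k ≤ n) :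
    n.choose (k - 1 - c) + n.choose c ≤ n.choose k := by
  have h := Nat.choose_add_choose_le_choose_add_add_one (n := n) (a := k - 1 - c) (c := c)
    (by omega)
  rwa [show k - 1 - c + c + 1 = k by omega] at h
end

section
/- Let p be a prime, H a subset of {0,1,...,p-1}, and let P(x₁,...,x_N) = Π_{h∈H} (x₁ + x₂ + ... + x_N - h) be a polynomial over F_p. If the set (H + pℤ) ∩ {0,1,...,N} has a gap of size at least g+1 (where g is a positive integer), then the set of polynomials {P(x)·Π_{i∈I} x_i : I ⊆ {1,...,N}, |I| ≤ g-1} is linearly independent over F_p, where the polynomials are viewed as functions on {0,1}^N. -/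
/-!
Write `F(T) = ∑_{I ⊆ T} c_I` for a vanishing combination `∑ c_I · 1_{I ⊆ T} · P(|T|)`.
Outside `H + pℤ` the factor `P(|T|)` is a unit, so the gap gives a window of `g` consecutive
sizes on which `F` vanishes. If `I₀` has maximal size among the `I` with `c_I ≠ 0`, pick `S`
disjoint from `I₀` with `|S|` the start of the window; inclusion–exclusion over the subsets
`A ⊆ I₀` then gives `0 = ∑_A (-1)^|A| F(S ∪ A) = ± c_{I₀}`.
-/

/-- A finite set `H ⊆ {0,…,N}` has a gap of size `≥ g`: either its minimum is at least
`g - 1`, or its maximum is at most `N - (g-1)`, or two consecutive elements differ by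
at least `g`. -/
def HasGap (H : Finset ℕ) (N g : ℕ) : Prop :=
  (∀ h ∈ H, g - 1 ≤ h) ∨ (∀ h ∈ H, h + (g - 1) ≤ N) ∨
    ∃ a ∈ H, ∃ b ∈ H, a + g ≤ b ∧ ∀ c ∈ H, c ≤ a ∨ b ≤ c

open Finset

section

variable {α ι R : Type*} [DecidableEq α] [CommRing R]

theorem Finset.sum_powerset_neg_one_pow_card' (X : Finset α) :
    ∑ B ∈ X.powerset, (-1 : R) ^ #B = if X = ∅ then 1 else 0 := by
  have := congrArg (Int.cast : ℤ → R) (sum_powerset_neg_one_pow_card (x := X))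
  push_cast at this
  exact this

theorem Finset.sum_Icc_neg_one_pow_card (D C : Finset α) :
    ∑ A ∈ Icc D C, (-1 : R) ^ #A = if D = C then (-1) ^ #C else 0 := by
  by_cases hDC : D ⊆ C
  · have hdisj : ∀ B ∈ (C \ D).powerset, Disjoint D B := fun B hB =>
      disjoint_sdiff.mono_right (mem_powerset.mp hB)
    have hinj : Set.InjOn (D ∪ ·) (C \ D).powerset := fun B hB B' hB' h => by
      have := congrArg (· \ D) h
      simp only [union_sdiff_left] at this
      rwa [sdiff_eq_self_of_disjoint (hdisj B hB).symm,
        sdiff_eq_self_of_disjoint (hdisj B' hB').symm] at this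
    have hempty : C \ D = ∅ ↔ D = C := by
      rw [sdiff_eq_empty_iff_subset]; exact ⟨hDC.antisymm, fun h => h ▸ subset_rfl⟩
    rw [Icc_eq_image_powerset hDC, sum_image hinj,
      sum_congr rfl fun B hB => by rw [card_union_of_disjoint (hdisj B hB), pow_add], ← mul_sum,
      sum_powerset_neg_one_pow_card']
    simp only [hempty, mul_ite, mul_one, mul_zero]
    split_ifs with h <;> simp [h]
  · rw [Icc_eq_empty hDC, sum_empty, if_neg (by rintro rfl; exact hDC subset_rfl)]

theorem Finset.sum_powerset_neg_one_pow_mul_sum_filter_subset [Fintype ι]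
    (s : ι → Finset α) (c : ι → R) (S C : Finset α) :
    ∑ A ∈ C.powerset, (-1 : R) ^ #A * ∑ i with s i ⊆ S ∪ A, c i =
      (-1) ^ #C * ∑ i with s i \ S = C, c i := by
  simp only [sum_filter, mul_sum]
  rw [sum_comm]
  refine sum_congr rfl fun i _ => ?_
  have hsub : ∀ A, s i ⊆ S ∪ A ↔ s i \ S ⊆ A := fun A => sdiff_le_iff.symm
  have hIcc : {A ∈ C.powerset | s i \ S ⊆ A} = Icc (s i \ S) C := by ext; simp [and_comm]
  simp_rw [hsub, mul_ite, mul_zero, ← sum_filter, ← sum_mul, hIcc, sum_Icc_neg_one_pow_card,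
    ite_mul, zero_mul]

theorem Finset.eq_zero_of_sum_filter_subset_eq_zero [Fintype α] [Fintype ι]
    {s : ι → Finset α} (hs : Function.Injective s) {c : ι → R} {m k : ℕ}
    (hk : ∀ i, #(s i) ≤ k) (hmk : m + k ≤ Fintype.card α)
    (hc : ∀ T : Finset α, m ≤ #T → #T ≤ m + k → ∑ i with s i ⊆ T, c i = 0) : c = 0 := by
  classical
  by_contra hc0
  obtain ⟨i₀, hi₀, hmax⟩ := exists_max_image {i | c i ≠ 0} (fun i => #(s i))
    (by simpa [Finset.Nonempty, funext_iff] using hc0)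
  obtain ⟨S, hS, hScard⟩ : ∃ S ⊆ (s i₀)ᶜ, #S = m :=
    exists_subset_card_eq (by rw [card_compl]; have := hk i₀; omega)
  have hdisj : Disjoint S (s i₀) := disjoint_of_subset_left hS disjoint_compl_left
  have hlhs : ∑ A ∈ (s i₀).powerset, (-1 : R) ^ #A * ∑ i with s i ⊆ S ∪ A, c i = 0 := by
    refine sum_eq_zero fun A hA => ?_
    have hAcard : #(S ∪ A) = m + #A := by
      rw [card_union_of_disjoint (hdisj.mono_right (mem_powerset.mp hA)), hScard]
    have := card_le_card (mem_powerset.mp hA)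
    have := hk i₀
    rw [hc _ (by omega) (by omega), mul_zero]
  have hrhs : ∑ i with s i \ S = s i₀, c i = c i₀ := by
    refine sum_eq_single_of_mem _ (by simp [sdiff_eq_self_of_disjoint hdisj.symm])
      fun i hi hii₀ => ?_
    by_contra hci
    have hsub : s i₀ ⊆ s i := (mem_filter.mp hi).2 ▸ sdiff_subset
    exact hii₀ (hs (eq_of_subset_of_card_le hsub (hmax i (by simpa using hci))).symm)
  rw [sum_powerset_neg_one_pow_mul_sum_filter_subset, hrhs] at hlhs
  exact (mem_filter.mp hi₀).2 (((isUnit_neg_one.pow _).mul_right_eq_zero).mp hlhs)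

end

theorem HasGap.exists_window {S : Finset ℕ} {N k : ℕ} (h : HasGap S N (k + 2))
    (hS : ∀ x ∈ S, x ≤ N) : ∃ m, m + min k N ≤ N ∧ ∀ x ∈ S, x < m ∨ m + k < x := by
  rcases h with hlow | hhigh | ⟨a, ha, b, hb, hab, hout⟩
  · exact ⟨0, by omega, fun x hx => by have := hlow x hx; omega⟩
  · exact ⟨N - k, by omega, fun x hx => by have := hhigh x hx; omega⟩
  · refine ⟨a + 1, by have := hS b hb; omega, fun x hx => ?_⟩
    have := hout x hx
    omega

theorem ZMod.prod_natCast_sub_ne_zero {p : ℕ} [Fact p.Prime] {H : Finset ℕ} (hH : H ⊆ range p)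
    {n : ℕ} (hn : n % p ∉ H) : ∏ h ∈ H, ((n : ZMod p) - h) ≠ 0 := by
  refine prod_ne_zero_iff.mpr fun h hh hzero => hn ?_
  rw [(ZMod.natCast_eq_natCast_iff' n h p).mp (sub_eq_zero.mp hzero),
    Nat.mod_eq_of_lt (mem_range.mp (hH hh))]
  exact hh

/-- Alon–Babai–Suzuki gap lemma: if `(H + pℤ) ∩ {0,…,N}` has a gap of size at least
`g + 1`, then the functions `x ↦ P(x)·∏_{i∈I} x_i` on `{0,1}^N` (identified with
subsets `T` of `{1,…,N}`, so that `∏_{i∈I} x_i` becomes the indicator of `I ⊆ T` and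
`x₁ + ⋯ + x_N` becomes `|T|`), for `|I| ≤ g - 1`, are linearly independent over `F_p`. -/
theorem stmt6 (p N g : ℕ) (hp : p.Prime) (hg : 1 ≤ g)
    (H : Finset ℕ) (hH : H ⊆ Finset.range p)
    (hgap : HasGap ((Finset.range (N + 1)).filter (fun x => x % p ∈ H)) N (g + 1)) :
    LinearIndependent (ZMod p)
      (fun I : {I : Finset (Fin N) // I.card ≤ g - 1} =>
        (fun T : Finset (Fin N) =>
          (if (I : Finset (Fin N)) ⊆ T then (1 : ZMod p) else 0) *
            ∏ h ∈ H, ((T.card : ZMod p) - (h : ZMod p)))) := by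
  have : Fact p.Prime := ⟨hp⟩
  rw [show g + 1 = g - 1 + 2 by omega] at hgap
  obtain ⟨m, hmN, hm⟩ := hgap.exists_window fun x hx => by
    simpa [Nat.lt_succ_iff] using (mem_filter.mp hx).1
  rw [Fintype.linearIndependent_iff]
  intro c hc
  refine congrFun (eq_zero_of_sum_filter_subset_eq_zero Subtype.val_injective
    (k := min (g - 1) N) (fun I => le_min I.2 (by simpa using card_le_univ I.1)) (by simpa)
    fun T hmT hTm => ?_)
  have hT : #T ≤ N := by simpa using card_le_univ T
  have hP := ZMod.prod_natCast_sub_ne_zero hH (n := #T) fun hTH => by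
    have := hm #T (mem_filter.mpr ⟨mem_range.mpr (by omega), hTH⟩)
    omega
  refine (mul_eq_zero.mp ?_).resolve_right hP
  simpa [sum_filter, ite_mul, ← mul_assoc, sum_mul] using congrFun hc T
end

section
/- Let p be a prime and let K, L be disjoint subsets of {0,1,...,p-1} with |K| = r, |L| = s. Let 𝒜 = {A₁,...,A_m} be a family of subsets of {1,...,n} with |A_i| mod p ∈ K for all i and |A_i ∩ A_j| mod p ∈ L for i ≠ j. For each subset I of X = {1,...,n-1}, define the linear form L_I = Σ_{i : I ⊆ A_i} x_i over F_p. Then the only solution over F_p to the system {L_I = 0 : I ⊆ X, |I| ≤ s} is the zero solution. Consequently, m ≤ dim span{L_I : I ⊆ X, |I| ≤ s}. -/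
/-!
Polynomial method. If `v ≠ 0`, pick `j` in its support and let `D = A j \ {n} ⊆ X`. For a
polynomial `P` of degree at most `s`, expanding `P` in the binomial basis `x ↦ x.choose k` and
counting `k`-subsets of `D` gives `∑ i, v i * P (|A i ∩ D|) = ∑ k, c k * ∑_{I ⊆ D, |I| = k} L_I(v)
= 0`. The polynomial `P = ∏_{l ∈ L} (x - (l - e))`, where `e ∈ {0, 1}` records whether `n ∈ A j`,
vanishes at `|A i ∩ D|` for the other `i` of the support (as `|A i ∩ A j| mod p ∈ L`) but not at
`|A j ∩ D|` (as `|A j| mod p ∈ K` and `K ∩ L = ∅`), forcing `v j = 0`. Hence `v ↦ (L_I(v))_I` is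
injective, so the `L_I` span the whole dual space.
-/

open Finset Polynomial Function

theorem Polynomial.eval_natCast_eq_sum_choose_smul_fwdDiff {R : Type*} [CommRing R]
    (P : R[X]) {N : ℕ} (hN : P.natDegree ≤ N) (x : ℕ) :
    P.eval (x : R) = ∑ k ∈ range (N + 1), x.choose k • (fwdDiff 1)^[k] P.eval 0 := by
  have hx := shift_eq_sum_fwdDiff_iter (1 : R) P.eval x 0
  rw [zero_add, nsmul_one] at hx
  rw [hx]
  refine (sum_subset (range_subset_range.mpr (by omega : x + 1 ≤ x + N + 1)) ?_).trans
    (sum_subset (range_subset_range.mpr (by omega : N + 1 ≤ x + N + 1)) ?_).symm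
  · intro k _ hk
    rw [Nat.choose_eq_zero_of_lt (by simpa using hk), zero_smul]
  · intro k _ hk
    rw [P.fwdDiff_iter_eq_zero_of_degree_lt (by simp at hk; omega), Pi.zero_apply, smul_zero]

theorem sum_powersetCard_ite_subset {α M : Type*} [DecidableEq α] [AddCommMonoid M]
    (D C : Finset α) (t : ℕ) (w : M) :
    ∑ I ∈ powersetCard t D, (if I ⊆ C then w else 0) = (#(C ∩ D)).choose t • w := by
  rw [← sum_filter, sum_const, ← card_powersetCard]
  congr 2
  ext I
  simp only [mem_filter, mem_powersetCard, subset_inter_iff]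
  tauto

section PolynomialMethod

variable {R α ι : Type*} [CommRing R] [DecidableEq α] [Fintype ι] (A : ι → Finset α)
  (v : ι → R) (D : Finset α) {s : ℕ}

theorem sum_mul_eval_card_inter_eq_zero
    (hv : ∀ I ⊆ D, #I ≤ s → ∑ i, (if I ⊆ A i then v i else 0) = 0)
    (P : R[X]) (hP : P.natDegree ≤ s) :
    ∑ i, v i * P.eval (#(A i ∩ D) : R) = 0 := by
  -- Expand `P` in the binomial basis; `(#(A i ∩ D)).choose k` counts the `k`-subsets of `D`
  -- contained in `A i`, so each coefficient multiplies a sum of the forms `L_I`, `I ⊆ D`.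
  simp_rw [P.eval_natCast_eq_sum_choose_smul_fwdDiff hP, mul_sum]
  rw [sum_comm]
  refine sum_eq_zero fun k hk => ?_
  calc ∑ i, v i * ((#(A i ∩ D)).choose k • (fwdDiff 1)^[k] P.eval 0)
      = (∑ I ∈ powersetCard k D, ∑ i, if I ⊆ A i then v i else 0) *
          (fwdDiff 1)^[k] P.eval 0 := by
        rw [sum_comm, sum_mul]
        refine sum_congr rfl fun i _ => ?_
        rw [sum_powersetCard_ite_subset, nsmul_eq_mul, nsmul_eq_mul]
        ring
    _ = 0 := by
        rw [sum_eq_zero fun I hI => ?_, zero_mul]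
        rw [mem_powersetCard] at hI
        exact hv I hI.1 (hI.2.trans_le (by simpa [Nat.lt_succ_iff] using hk))

theorem apply_eq_zero_of_forall_sum_ite_subset_eq_zero [IsDomain R]
    (hv : ∀ I ⊆ D, #I ≤ s → ∑ i, (if I ⊆ A i then v i else 0) = 0)
    (j : ι) (T : Finset R) (hT : #T ≤ s)
    (hmem : ∀ i ≠ j, v i ≠ 0 → (#(A i ∩ D) : R) ∈ T) (hj : (#(A j ∩ D) : R) ∉ T) :
    v j = 0 := by
  set P : R[X] := ∏ l ∈ T, (X - C l)
  have heval : ∀ x, P.eval x = ∏ l ∈ T, (x - l) := fun x => by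
    simp only [P, eval_prod, eval_sub, eval_X, eval_C]
  have hsum := sum_mul_eval_card_inter_eq_zero A v D hv P
    ((natDegree_finsetProd_X_sub_C_eq_card T id).trans_le hT)
  rw [sum_eq_single j, mul_eq_zero, heval] at hsum
  · exact hsum.resolve_right <|
      prod_ne_zero_iff.mpr fun l hl => sub_ne_zero.mpr fun h => hj (h ▸ hl)
  · intro i _ hij
    by_cases hvi : v i = 0
    · rw [hvi, zero_mul]
    · rw [heval, prod_eq_zero (hmem i hij hvi) (sub_self _), mul_zero]
  · simp

end PolynomialMethod

theorem Submodule.span_eq_top_of_forall_dotProduct_eq_zero {K ι : Type*} [Field K] [Fintype ι]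
    [DecidableEq ι] (S : Set (ι → K)) (h : ∀ v, (∀ w ∈ S, w ⬝ᵥ v = 0) → v = 0) :
    Submodule.span K S = ⊤ := by
  rw [← Submodule.dualAnnihilator_eq_bot_iff, eq_bot_iff]
  intro f hf
  rw [Submodule.mem_dualAnnihilator] at hf
  have hf_eq : ∀ w, f w = w ⬝ᵥ fun i => f (Pi.single i 1) := fun w => by
    rw [f.pi_apply_eq_sum_univ w, dotProduct]
    refine sum_congr rfl fun i _ => ?_
    congr 2
    ext j
    simp [Pi.single_apply, eq_comm]
  have hv := h _ fun w hw => (hf_eq w).symm.trans (hf w (Submodule.subset_span hw))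
  rw [Submodule.mem_bot]
  refine LinearMap.ext fun w => ?_
  rw [hf_eq, hv, dotProduct_zero, LinearMap.zero_apply]

theorem ZMod.natCast_ne_natCast_of_disjoint {p : ℕ} {K L : Finset ℕ} (hK : K ⊆ range p)
    (hL : L ⊆ range p) (hdisj : Disjoint K L) {k l : ℕ} (hk : k ∈ K) (hl : l ∈ L) :
    (k : ZMod p) ≠ l := by
  rw [Ne, ZMod.natCast_eq_natCast_iff', Nat.mod_eq_of_lt (mem_range.mp (hK hk)),
    Nat.mod_eq_of_lt (mem_range.mp (hL hl))]
  rintro rfl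
  exact disjoint_left.mp hdisj hk hl

theorem eq_zero_of_modIntersecting {α ι : Type*} [DecidableEq α] [Fintype ι] {p : ℕ}
    [Fact p.Prime] {K L : Finset ℕ} (hK : K ⊆ range p) (hL : L ⊆ range p)
    (hdisj : Disjoint K L) (A : ι → Finset α) (hsize : ∀ i, #(A i) % p ∈ K)
    (hint : ∀ i j, i ≠ j → #(A i ∩ A j) % p ∈ L) (a : α) (X : Finset α)
    (hX : ∀ i, (A i).erase a ⊆ X) (v : ι → ZMod p)
    (hv : ∀ I ⊆ X, #I ≤ #L → ∑ i, (if I ⊆ A i then v i else 0) = 0) :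
    v = 0 := by
  by_contra hne
  obtain ⟨j₀, hj₀⟩ := Function.ne_iff.mp hne
  -- Testing against `D = A j \ {a}` shifts every `#(A i ∩ A j)` by the same amount only if
  -- `a ∈ A j` forces `a` into every set of the support; such a `j` exists.
  obtain ⟨j, hj, hja⟩ : ∃ j, v j ≠ 0 ∧ (a ∈ A j → ∀ i, v i ≠ 0 → a ∈ A i) := by
    by_cases h : ∃ j, v j ≠ 0 ∧ a ∉ A j
    · obtain ⟨j, hj, ha⟩ := h
      exact ⟨j, hj, fun h => absurd h ha⟩
    · push Not at h
      exact ⟨j₀, hj₀, fun _ => h⟩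
  set e : ZMod p := if a ∈ A j then 1 else 0
  have hcard : ∀ i, v i ≠ 0 → (#(A i ∩ (A j).erase a) : ZMod p) = #(A i ∩ A j) - e := by
    intro i hi
    rw [inter_erase]
    by_cases ha : a ∈ A j
    · simp [e, ha, cast_card_erase_of_mem (mem_inter.mpr ⟨hja ha i hi, ha⟩)]
    · simp [e, ha]
  refine hj (apply_eq_zero_of_forall_sum_ite_subset_eq_zero A v ((A j).erase a)
    (fun I hI => hv I (hI.trans (hX j))) j (L.image fun l : ℕ => (l : ZMod p) - e) card_image_le
    (fun i hij hi => ?_) ?_)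
  · rw [hcard i hi]
    exact mem_image.mpr ⟨_, hint i j hij, by rw [ZMod.natCast_mod]⟩
  · rw [hcard j hj, inter_self]
    intro h
    obtain ⟨l, hl, hle⟩ := mem_image.mp h
    refine ZMod.natCast_ne_natCast_of_disjoint hK hL hdisj (hsize j) hl ?_
    rw [ZMod.natCast_mod]
    linear_combination -hle

theorem stmt8_general (p n s m : ℕ) (hp : p.Prime) (K L : Finset ℕ)
    (hK : K ⊆ Finset.range p) (hL : L ⊆ Finset.range p) (hdisj : Disjoint K L)
    (hLs : L.card = s)
    (A : Fin m → Finset ℕ)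
    (hsub : ∀ i, A i ⊆ Finset.Icc 1 n)
    (hsize : ∀ i, (A i).card % p ∈ K)
    (hint : ∀ i j, i ≠ j → (A i ∩ A j).card % p ∈ L) :
    (∀ v : Fin m → ZMod p,
        (∀ I : Finset ℕ, I ⊆ Finset.Icc 1 (n - 1) → I.card ≤ s →
          ∑ i : Fin m, (if I ⊆ A i then v i else 0) = 0) → v = 0) ∧
    m ≤ Module.finrank (ZMod p)
        (Submodule.span (ZMod p)
          {w : Fin m → ZMod p | ∃ I : Finset ℕ, I ⊆ Finset.Icc 1 (n - 1) ∧
            I.card ≤ s ∧ w = fun i => if I ⊆ A i then 1 else 0}) := by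
  have : Fact p.Prime := ⟨hp⟩
  subst hLs
  have hX : ∀ i, (A i).erase n ⊆ Icc 1 (n - 1) := fun i x hx => by
    have := mem_Icc.mp (hsub i (mem_of_mem_erase hx))
    have := ne_of_mem_erase hx
    rw [mem_Icc]
    omega
  have hsol := eq_zero_of_modIntersecting hK hL hdisj A hsize hint n _ hX
  refine ⟨hsol, ?_⟩
  rw [Submodule.span_eq_top_of_forall_dotProduct_eq_zero _ fun v hv => ?_, finrank_top,
    Module.finrank_fin_fun]
  refine hsol v fun I hI hIs => ?_
  simpa [dotProduct, ite_mul] using hv _ ⟨I, hI, hIs, rfl⟩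

/-- For a mod-`p` `L`-intersecting family `A₁,…,A_m ⊆ {1,…,n}` with sizes mod `p` in `K`
(`K`, `L` disjoint), the system `{L_I = 0 : I ⊆ X = {1,…,n-1}, |I| ≤ s}` of linear forms
`L_I = ∑_{i : I ⊆ A_i} x_i` over `F_p` has only the trivial solution; consequently
`m ≤ dim span{L_I}` (each `L_I` represented by its coefficient vector in `F_p^m`). -/
theorem stmt8 (p n r s m : ℕ) (hp : p.Prime) (K L : Finset ℕ)
    (hK : K ⊆ Finset.range p) (hL : L ⊆ Finset.range p) (hdisj : Disjoint K L)
    (hKr : K.card = r) (hLs : L.card = s)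
    (A : Fin m → Finset ℕ) (hinj : Function.Injective A)
    (hsub : ∀ i, A i ⊆ Finset.Icc 1 n)
    (hsize : ∀ i, (A i).card % p ∈ K)
    (hint : ∀ i j, i ≠ j → (A i ∩ A j).card % p ∈ L) :
    (∀ v : Fin m → ZMod p,
        (∀ I : Finset ℕ, I ⊆ Finset.Icc 1 (n - 1) → I.card ≤ s →
          ∑ i : Fin m, (if I ⊆ A i then v i else 0) = 0) → v = 0) ∧
    m ≤ Module.finrank (ZMod p)
        (Submodule.span (ZMod p)
          {w : Fin m → ZMod p | ∃ I : Finset ℕ, I ⊆ Finset.Icc 1 (n - 1) ∧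
            I.card ≤ s ∧ w = fun i => if I ⊆ A i then 1 else 0}) :=
  stmt8_general p n s m hp K L hK hL hdisj hLs A hsub hsize hint
end

section
/- Let u, v be positive integers with u < v < p and u + v ≤ n - 1, and let L_J (for J ⊆ X = {1,...,n-1}) be the linear forms L_J = Σ_{j: J ⊆ A_j} x_j over F_p associated to a family 𝒜 = {A₁,...,A_m} of subsets of {1,...,n}. Then dim( span{L_J : |J| = v} / span{Σ_{|J|=v, I⊆J} L_J : |I| = u} ) ≤ C(n-1, v) - C(n-1, u). -/
open Finset
namespace QRC

variable {K : Type*} [Field K]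

-- helpers


variable {K : Type*} [Field K]

/-- number of `w`-subsets of `X` containing a fixed `T ⊆ X`. -/
lemma card_filter_supersets (X T : Finset ℕ) (w : ℕ) (hT : T ⊆ X) (hTw : T.card ≤ w) :
    ((X.powersetCard w).filter (fun S => T ⊆ S)).card
      = (X.card - T.card).choose (w - T.card) := by
  rw [← Finset.card_sdiff_of_subset hT, ← Finset.card_powersetCard (w - T.card) (X \ T)]
  apply Finset.card_bij' (fun S _ => S \ T) (fun R _ => R ∪ T)
  · intro S hS
    simp only [mem_filter, mem_powersetCard] at hS
    simp only [mem_powersetCard]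
    exact ⟨sdiff_subset_sdiff hS.1.1 le_rfl, by rw [card_sdiff_of_subset hS.2, hS.1.2]⟩
  · intro R hR
    simp only [mem_powersetCard] at hR
    simp only [mem_filter, mem_powersetCard]
    have hRX : R ⊆ X := hR.1.trans (sdiff_subset)
    have hdisj : Disjoint R T := Finset.disjoint_right.2 fun a haT haR =>
      (Finset.mem_sdiff.1 (hR.1 haR)).2 haT
    refine ⟨⟨union_subset hRX hT, ?_⟩, subset_union_right⟩
    rw [card_union_of_disjoint hdisj, hR.2]
    omega
  · intro S hS
    simp only [mem_filter] at hS
    exact sdiff_union_of_subset hS.2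
  · intro R hR
    simp only [mem_powersetCard] at hR
    have hdisj : Disjoint R T := Finset.disjoint_right.2 fun a haT haR =>
      (Finset.mem_sdiff.1 (hR.1 haR)).2 haT
    exact union_sdiff_cancel_right hdisj

lemma filter_supersets_empty (X T : Finset ℕ) (w : ℕ) (hTw : w < T.card) :
    ((X.powersetCard w).filter (fun S => T ⊆ S)) = ∅ := by
  apply Finset.filter_false_of_mem
  intro S hS hTS
  simp only [mem_powersetCard] at hS
  have := Finset.card_le_card hTS
  omega

lemma pc_subset_of_subset (X T : Finset ℕ) (a : ℕ) (hT : T ⊆ X) :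
    T.powersetCard a = (X.powersetCard a).filter (fun I => I ⊆ T) := by
  ext I
  simp only [mem_powersetCard, mem_filter]
  exact ⟨fun h => ⟨⟨h.1.trans hT, h.2⟩, h.1⟩, fun h => ⟨h.2, h.1.2⟩⟩


def Up (a : ℕ) (f : Finset ℕ → K) (S : Finset ℕ) : K := ∑ I ∈ S.powersetCard a, f I

def Dn (X : Finset ℕ) (a : ℕ) (f : Finset ℕ → K) (T : Finset ℕ) : K :=
  ∑ I ∈ (X.powersetCard a).filter (fun I => T ⊆ I), f I

lemma pc_subset_of_subset' (X T : Finset ℕ) (a : ℕ) (hT : T ⊆ X) :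
    T.powersetCard a = (X.powersetCard a).filter (fun I => I ⊆ T) := by
  ext I
  simp only [mem_powersetCard, mem_filter]
  exact ⟨fun h => ⟨⟨h.1.trans hT, h.2⟩, h.1⟩, fun h => ⟨h.2, h.1.2⟩⟩

lemma sum_up_swap (X T : Finset ℕ) (a w : ℕ) (f : Finset ℕ → K) :
    ∑ S ∈ (X.powersetCard w).filter (fun S => T ⊆ S), Up a f S
      = ∑ I ∈ X.powersetCard a,
          (((X.powersetCard w).filter (fun S => T ∪ I ⊆ S)).card : K) * f I := by
  have h1 : ∀ S ∈ (X.powersetCard w).filter (fun S => T ⊆ S),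
      Up a f S = ∑ I ∈ X.powersetCard a, if I ⊆ S then f I else 0 := by
    intro S hS
    simp only [mem_filter, mem_powersetCard] at hS
    rw [Up, pc_subset_of_subset' X S a hS.1.1, Finset.sum_filter]
  rw [Finset.sum_congr rfl h1, Finset.sum_comm]
  refine Finset.sum_congr rfl fun I hI => ?_
  rw [← Finset.sum_filter, Finset.filter_filter, Finset.sum_const, nsmul_eq_mul]
  congr 3
  ext S
  simp [Finset.union_subset_iff]

lemma sum_dn_swap (X T : Finset ℕ) (a b : ℕ) (f : Finset ℕ → K) :
    ∑ L ∈ T.powersetCard b, Dn X a f L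
      = ∑ I ∈ X.powersetCard a, (((I ∩ T).card.choose b : ℕ) : K) * f I := by
  simp only [Dn]
  rw [Finset.sum_comm' (t' := X.powersetCard a)
    (s' := fun I => (T.powersetCard b).filter (fun L => L ⊆ I))]
  · refine Finset.sum_congr rfl fun I hI => ?_
    rw [Finset.sum_const, nsmul_eq_mul]
    congr 2
    rw [← Finset.card_powersetCard b (I ∩ T)]
    congr 1
    ext L
    simp only [mem_filter, mem_powersetCard, Finset.subset_inter_iff]
    tauto
  · intro L I
    simp only [mem_filter, mem_powersetCard]
    tauto

lemma UpUp (a b : ℕ) (hab : a ≤ b) (S : Finset ℕ) (f : Finset ℕ → K) :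
    ∑ T ∈ S.powersetCard b, Up a f T
      = (((S.card - a).choose (b - a) : ℕ) : K) * Up a f S := by
  have := sum_up_swap S ∅ a b f
  simp only [Finset.empty_subset, Finset.filter_true_of_mem, fun I => Finset.empty_union I,
    imp_true_iff] at this
  rw [this, Up, Finset.mul_sum]
  refine Finset.sum_congr rfl fun I hI => ?_
  simp only [mem_powersetCard] at hI
  rw [card_filter_supersets S I b hI.1 (by omega), hI.2]

end QRC

namespace QRC
variable {K : Type*} [Field K]
open Finset

lemma star (X : Finset ℕ) (a w' : ℕ) (ha : 1 ≤ a) (f : Finset ℕ → K) (S' : Finset ℕ)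
    (hwa : w' + a ≤ X.card) (hS' : S' ∈ X.powersetCard w') :
    ∑ S ∈ (X.powersetCard (w' + 1)).filter (fun S => S' ⊆ S), Up a f S
      = ((X.card - w' - a : ℕ) : K) * Up a f S'
        + ∑ L ∈ S'.powersetCard (a - 1), Dn X a f L := by
  simp only [mem_powersetCard] at hS'
  rw [sum_up_swap, sum_dn_swap, Up, pc_subset_of_subset' X S' a hS'.1, Finset.sum_filter,
    Finset.mul_sum, ← Finset.sum_add_distrib]
  refine Finset.sum_congr rfl fun I hI => ?_
  simp only [mem_powersetCard] at hI
  have hinter : (I ∩ S').card + (I \ S').card = a := by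
    rw [Finset.card_inter_add_card_sdiff, hI.2]
  by_cases hIS : I ⊆ S'
  · have h1 : S' ∪ I = S' := Finset.union_eq_left.2 hIS
    have h2 : I ∩ S' = I := Finset.inter_eq_left.2 hIS
    rw [h1, card_filter_supersets X S' (w' + 1) hS'.1 (by omega), hS'.2, h2, hI.2, if_pos hIS]
    have hc1 : (X.card - w').choose (w' + 1 - w') = X.card - w' := by
      simp [Nat.choose_one_right]
    have hc2 : a.choose (a - 1) = a := by
      rw [Nat.choose_symm (by omega)]
      simp only [show a - (a - 1) = 1 by omega, Nat.choose_one_right]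
    rw [hc1, hc2]
    have hn : X.card - w' = (X.card - w' - a) + a := by omega
    have key := congrArg (Nat.cast : ℕ → K) hn
    push_cast at key
    rw [key]
    ring
  · have hsd : 1 ≤ (I \ S').card := by
      rw [Nat.one_le_iff_ne_zero, Ne, Finset.card_eq_zero, Finset.sdiff_eq_empty_iff_subset]
      exact hIS
    have hcardu : (S' ∪ I).card = w' + (I \ S').card := by
      have := Finset.card_union_add_card_inter S' I
      have h3 : (S' ∩ I).card = (I ∩ S').card := by rw [Finset.inter_comm]
      omega
    rw [if_neg hIS, mul_zero, zero_add]
    by_cases hone : (I \ S').card = 1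
    · have hci : (I ∩ S').card = a - 1 := by omega
      have hcu : (S' ∪ I).card = w' + 1 := by omega
      rw [card_filter_supersets X (S' ∪ I) (w' + 1)
          (Finset.union_subset hS'.1 hI.1) (by omega), hcu, hci, Nat.choose_self]
      simp
    · have h2 : 2 ≤ (I \ S').card := by omega
      have hw : w' + 1 < (S' ∪ I).card := by omega
      rw [filter_supersets_empty X (S' ∪ I) (w' + 1) hw]
      have : (I ∩ S').card.choose (a - 1) = 0 := by
        apply Nat.choose_eq_zero_of_lt
        have : (I \ S').card ≤ a := by omega
        omega
      simp [this]

lemma star0 (X : Finset ℕ) (w' : ℕ) (f : Finset ℕ → K) (S' : Finset ℕ)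
    (hS' : S' ∈ X.powersetCard w') :
    ∑ S ∈ (X.powersetCard (w' + 1)).filter (fun S => S' ⊆ S), Up 0 f S
      = ((X.card - w' : ℕ) : K) * Up 0 f S' := by
  simp only [mem_powersetCard] at hS'
  have hup : ∀ S : Finset ℕ, Up 0 f S = f ∅ := by
    intro S; simp [Up]
  simp only [hup]
  rw [Finset.sum_const, card_filter_supersets X S' (w' + 1) hS'.1 (by omega), hS'.2,
    nsmul_eq_mul]
  simp [Nat.choose_one_right]


lemma cast_ne_zero_of_lt {p : ℕ} [Fact p.Prime] {k : ℕ} (h0 : 0 < k) (hk : k < p) :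
    (k : ZMod p) ≠ 0 := by
  rw [Ne, ZMod.natCast_eq_zero_iff]
  intro h
  have := Nat.le_of_dvd h0 h
  omega


variable {K : Type*} [Field K]




lemma descend (p : ℕ) [Fact p.Prime] (X : Finset ℕ) (u v d : ℕ) (hu : 1 ≤ u) (huv : u ≤ v)
    (hv : v < p) (hN : u + v = X.card) (hd : d + 1 ≤ v - u) (f g : Finset ℕ → ZMod p)
    (hg : ∀ S ∈ X.powersetCard (v - d), Up u f S = Up (u - 1) g S) :
    ∃ g' : Finset ℕ → ZMod p,
      ∀ S' ∈ X.powersetCard (v - (d + 1)), Up u f S' = Up (u - 1) g' S' := by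
  set w' := v - (d + 1) with hw'
  have hvd : v - d = w' + 1 := by omega
  have hd1 : ((d + 1 : ℕ) : ZMod p) ≠ 0 := cast_ne_zero_of_lt (by omega) (by omega)
  rcases Nat.lt_or_ge u 2 with hu2 | hu2
  · -- u = 1
    have hu1 : u = 1 := by omega
    subst hu1
    refine ⟨fun T => ((d + 1 : ℕ) : ZMod p)⁻¹ *
      (((d + 2 : ℕ) : ZMod p) * g T - Dn X 1 f T), ?_⟩
    intro S' hS'
    have eqi := star X 1 w' le_rfl f S' (by omega) hS'
    have eqii : ∑ S ∈ (X.powersetCard (w' + 1)).filter (fun S => S' ⊆ S), Up 1 f S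
        = ∑ S ∈ (X.powersetCard (w' + 1)).filter (fun S => S' ⊆ S), Up 0 g S := by
      refine Finset.sum_congr rfl fun S hS => ?_
      rw [← hvd] at hS
      exact hg S (Finset.mem_of_mem_filter S hS)
    rw [eqii, star0 X w' g S' hS'] at eqi
    have c1 : (X.card - w' - 1 : ℕ) = d + 1 := by omega
    have c2 : (X.card - w' : ℕ) = d + 2 := by omega
    rw [c1, c2] at eqi
    have hsum : ∑ L ∈ S'.powersetCard (1 - 1), Dn X 1 f L = Up 0 (Dn X 1 f) S' := rfl
    rw [hsum] at eqi
    have expand : Up 0 (fun T => ((d + 1 : ℕ) : ZMod p)⁻¹ *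
        (((d + 2 : ℕ) : ZMod p) * g T - Dn X 1 f T)) S'
        = ((d + 1 : ℕ) : ZMod p)⁻¹ *
          (((d + 2 : ℕ) : ZMod p) * Up 0 g S' - Up 0 (Dn X 1 f) S') := by
      unfold Up
      rw [← Finset.mul_sum, Finset.sum_sub_distrib, ← Finset.mul_sum]
    rw [expand, eq_inv_mul_iff_mul_eq₀ hd1]
    linear_combination -eqi
  · -- u ≥ 2
    have he : (w' - (u - 2) : ℕ) = v - d - u + 1 := by omega
    set e : ℕ := w' - (u - 2) with hedef
    have he0 : ((e : ℕ) : ZMod p) ≠ 0 := cast_ne_zero_of_lt (by omega) (by omega)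
    refine ⟨fun T => ((d + 1 : ℕ) : ZMod p)⁻¹ *
      (((d + 2 : ℕ) : ZMod p) * g T
        + ((e : ℕ) : ZMod p)⁻¹ * Up (u - 2) (Dn X (u - 1) g) T - Dn X u f T), ?_⟩
    intro S' hS'
    have hS'card : S'.card = w' := (Finset.mem_powersetCard.1 hS').2
    have eqi := star X u w' (by omega) f S' (by omega) hS'
    have eqii : ∑ S ∈ (X.powersetCard (w' + 1)).filter (fun S => S' ⊆ S), Up u f S
        = ∑ S ∈ (X.powersetCard (w' + 1)).filter (fun S => S' ⊆ S), Up (u - 1) g S := by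
      refine Finset.sum_congr rfl fun S hS => ?_
      rw [← hvd] at hS
      exact hg S (Finset.mem_of_mem_filter S hS)
    have eqiii := star X (u - 1) w' (by omega) g S' (by omega) hS'
    rw [eqii, eqiii] at eqi
    have c1 : (X.card - w' - u : ℕ) = d + 1 := by omega
    have c2 : (X.card - w' - (u - 1) : ℕ) = d + 2 := by omega
    rw [c1, c2] at eqi
    have hsum1 : ∑ L ∈ S'.powersetCard (u - 1), Dn X u f L = Up (u - 1) (Dn X u f) S' := rfl
    have hsum2 : ∑ L ∈ S'.powersetCard (u - 1 - 1), Dn X (u - 1) g L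
        = Up (u - 1 - 1) (Dn X (u - 1) g) S' := rfl
    rw [hsum1, hsum2] at eqi
    have hupup := UpUp (u - 2) (u - 1) (by omega) S' (Dn X (u - 1) g)
    rw [hS'card] at hupup
    have hch : ((w' - (u - 2)).choose (u - 1 - (u - 2)) : ℕ) = e := by
      rw [show u - 1 - (u - 2) = 1 from by omega, Nat.choose_one_right]
    rw [hch] at hupup
    have hu21 : u - 1 - 1 = u - 2 := by omega
    rw [hu21] at eqi
    have expand : Up (u - 1) (fun T => ((d + 1 : ℕ) : ZMod p)⁻¹ *
        (((d + 2 : ℕ) : ZMod p) * g T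
          + ((e : ℕ) : ZMod p)⁻¹ * Up (u - 2) (Dn X (u - 1) g) T - Dn X u f T)) S'
        = ((d + 1 : ℕ) : ZMod p)⁻¹ *
          (((d + 2 : ℕ) : ZMod p) * Up (u - 1) g S'
            + ((e : ℕ) : ZMod p)⁻¹ * (∑ T ∈ S'.powersetCard (u - 1), Up (u - 2) (Dn X (u - 1) g) T)
            - Up (u - 1) (Dn X u f) S') := by
      unfold Up
      rw [← Finset.mul_sum, Finset.sum_sub_distrib, Finset.sum_add_distrib, ← Finset.mul_sum,
        ← Finset.mul_sum]
    rw [expand, hupup, inv_mul_cancel_left₀ he0, eq_inv_mul_iff_mul_eq₀ hd1]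
    linear_combination -eqi



theorem key (p : ℕ) [Fact p.Prime] (k : ℕ) :
    ∀ (u v : ℕ) (X : Finset ℕ), u + X.card ≤ k → u ≤ v → v < p → u + v ≤ X.card →
      ∀ f : Finset ℕ → ZMod p,
        (∀ J ∈ X.powersetCard v, Up u f J = 0) →
        ∀ I ∈ X.powersetCard u, f I = 0 := by
  induction k using Nat.strong_induction_on with
  | _ k ih =>
  intro u v X hk huv hv huvX f hf I hI
  rcases Nat.eq_zero_or_pos u with hu0 | hu0
  · subst hu0
    have hIe : I = ∅ := by
      have := (Finset.mem_powersetCard.1 hI).2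
      exact Finset.card_eq_zero.1 this
    obtain ⟨J, hJ⟩ : (X.powersetCard v).Nonempty := by
      rw [← Finset.card_pos, Finset.card_powersetCard]
      exact Nat.choose_pos (by omega)
    have := hf J hJ
    rw [Up] at this
    rw [Finset.powersetCard_zero, Finset.sum_singleton] at this
    rw [hIe]
    exact this
  · rcases Nat.lt_or_ge (u + v) X.card with hlt | hge
    · -- block induction on the ground set
      obtain ⟨x, hx⟩ : X.Nonempty := Finset.card_pos.1 (by omega)
      set X' := X.erase x with hX'
      have hX'card : X'.card = X.card - 1 := Finset.card_erase_of_mem hx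
      have hX'sub : X' ⊆ X := Finset.erase_subset x X
      have step1 : ∀ I ∈ X'.powersetCard u, f I = 0 := by
        refine ih (u + X'.card) (by omega) u v X' le_rfl huv hv (by omega) f ?_
        intro J hJ
        refine hf J ?_
        rw [Finset.mem_powersetCard] at hJ ⊢
        exact ⟨hJ.1.trans hX'sub, hJ.2⟩
      have step2 : ∀ I' ∈ X'.powersetCard (u - 1), f (insert x I') = 0 := by
        refine ih ((u - 1) + X'.card) (by omega) (u - 1) (v - 1) X' le_rfl (by omega)
          (by omega) (by omega) (fun I' => f (insert x I')) ?_
        intro J' hJ'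
        rw [Finset.mem_powersetCard] at hJ'
        have hxJ' : x ∉ J' := fun hmem => (Finset.notMem_erase x X) (hJ'.1 hmem)
        have hJX : insert x J' ∈ X.powersetCard v := by
          rw [Finset.mem_powersetCard]
          constructor
          · exact Finset.insert_subset hx (hJ'.1.trans hX'sub)
          · rw [Finset.card_insert_of_notMem hxJ', hJ'.2]
            omega
        have h0 := hf (insert x J') hJX
        rw [Up] at h0
        rw [show u = (u - 1) + 1 from by omega,
          Finset.powersetCard_succ_insert hxJ'] at h0
        rw [Finset.sum_union ?hdisj, Finset.sum_image ?hinj] at h0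
        case hdisj =>
          rw [Finset.disjoint_left]
          intro S hS hS2
          obtain ⟨S', hS', heqS⟩ := Finset.mem_image.1 hS2
          have hxS : x ∈ S := heqS ▸ Finset.mem_insert_self x S'
          exact hxJ' ((Finset.mem_powersetCard.1 hS).1 hxS)
        case hinj =>
          intro S1 h1 S2 h2 heq
          have hx1 : x ∉ S1 := fun hc => hxJ' ((Finset.mem_powersetCard.1 h1).1 hc)
          have hx2 : x ∉ S2 := fun hc => hxJ' ((Finset.mem_powersetCard.1 h2).1 hc)
          rw [← Finset.erase_insert hx1, ← Finset.erase_insert hx2, heq]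
        have hz : ∑ S ∈ J'.powersetCard (u - 1 + 1), f S = 0 := by
          apply Finset.sum_eq_zero
          intro S hS
          apply step1
          rw [Finset.mem_powersetCard] at hS ⊢
          exact ⟨hS.1.trans hJ'.1, by omega⟩
        rw [hz, zero_add] at h0
        rw [Up]
        exact h0
      rw [Finset.mem_powersetCard] at hI
      by_cases hxI : x ∈ I
      · rw [← Finset.insert_erase hxI]
        apply step2
        rw [Finset.mem_powersetCard]
        exact ⟨Finset.erase_subset_erase x hI.1, by rw [Finset.card_erase_of_mem hxI, hI.2]⟩
      · apply step1
        rw [Finset.mem_powersetCard]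
        exact ⟨fun a ha => Finset.mem_erase.2 ⟨fun hax => hxI (hax ▸ ha), hI.1 ha⟩, hI.2⟩
    · -- boundary case : u + v = X.card
      have hN : u + v = X.card := le_antisymm huvX hge
      have claim : ∀ d : ℕ, d ≤ v - u → ∃ g : Finset ℕ → ZMod p,
          ∀ S ∈ X.powersetCard (v - d), Up u f S = Up (u - 1) g S := by
        intro d
        induction d with
        | zero =>
          intro _
          refine ⟨fun _ => 0, fun S hS => ?_⟩
          rw [Nat.sub_zero] at hS
          rw [hf S hS, Up, Finset.sum_const, smul_zero]
        | succ d ihd =>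
          intro hd1
          obtain ⟨g, hg⟩ := ihd (by omega)
          exact descend p X u v d hu0 huv hv hN (by omega) f g hg
      obtain ⟨g, hg⟩ := claim (v - u) le_rfl
      have hvu : v - (v - u) = u := by omega
      rw [hvu] at hg
      have hfg : ∀ I ∈ X.powersetCard u, f I = Up (u - 1) g I := by
        intro I hI
        have := hg I hI
        have hpc : I.powersetCard u = {I} := by
          rw [← (Finset.mem_powersetCard.1 hI).2]
          exact Finset.powersetCard_self I
        rw [Up, hpc, Finset.sum_singleton] at this
        exact this
      have hUp0 : ∀ J ∈ X.powersetCard v, Up (u - 1) g J = 0 := by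
        intro J hJ
        have h0 := hf J hJ
        rw [Up] at h0
        have hcongr : ∑ I ∈ J.powersetCard u, f I
            = ∑ I ∈ J.powersetCard u, Up (u - 1) g I := by
          refine Finset.sum_congr rfl fun I hI' => ?_
          apply hfg
          rw [Finset.mem_powersetCard] at hI' ⊢
          exact ⟨hI'.1.trans (Finset.mem_powersetCard.1 hJ).1, hI'.2⟩
        rw [hcongr, UpUp (u - 1) u (by omega) J g] at h0
        have hJcard : J.card = v := (Finset.mem_powersetCard.1 hJ).2
        rw [hJcard] at h0
        have hch : ((v - (u - 1)).choose (u - (u - 1)) : ℕ) = v - u + 1 := by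
          rw [show u - (u - 1) = 1 from by omega, Nat.choose_one_right]
          omega
        rw [hch] at h0
        have hne : ((v - u + 1 : ℕ) : ZMod p) ≠ 0 := cast_ne_zero_of_lt (by omega) (by omega)
        exact (mul_eq_zero.1 h0).resolve_left hne
      have hg0 : ∀ I' ∈ X.powersetCard (u - 1), g I' = 0 :=
        ih ((u - 1) + X.card) (by omega) (u - 1) v X le_rfl (by omega) hv (by omega) g hUp0
      rw [hfg I hI, Up]
      apply Finset.sum_eq_zero
      intro I' hI'
      apply hg0
      rw [Finset.mem_powersetCard] at hI' ⊢
      exact ⟨hI'.1.trans (Finset.mem_powersetCard.1 hI).1, hI'.2⟩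

end QRC


/-- Qian–Ray-Chaudhuri counting lemma on the ground set `X = {1,…,n-1}`: for
`u < v < p` with `u + v ≤ n - 1`,
`dim( span{L_J : |J| = v} / span{∑_{|J|=v, I⊆J} L_J : |I| = u} ) ≤ C(n-1,v) - C(n-1,u)`,
where `L_J = ∑_{j : J ⊆ A_j} x_j` is represented by its coefficient vector in `F_p^m`. -/
theorem stmt10 (p n m u v : ℕ) (hp : p.Prime) (hu : 0 < u) (huv : u < v) (hvp : v < p)
    (huvn : u + v ≤ n - 1)
    (A : Fin m → Finset ℕ) (hsub : ∀ j, A j ⊆ Finset.Icc 1 n) :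
    Module.finrank (ZMod p)
        ((Submodule.span (ZMod p)
            {w : Fin m → ZMod p | ∃ J : Finset ℕ, J ⊆ Finset.Icc 1 (n - 1) ∧
              J.card = v ∧ w = fun j => if J ⊆ A j then 1 else 0}) ⧸
          (Submodule.comap
            (Submodule.span (ZMod p)
              {w : Fin m → ZMod p | ∃ J : Finset ℕ, J ⊆ Finset.Icc 1 (n - 1) ∧
                J.card = v ∧ w = fun j => if J ⊆ A j then 1 else 0}).subtype
            (Submodule.span (ZMod p)
              {w : Fin m → ZMod p | ∃ I : Finset ℕ, I ⊆ Finset.Icc 1 (n - 1) ∧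
                I.card = u ∧ w = fun j =>
                  ∑ J ∈ (Finset.Icc 1 (n - 1)).powerset.filter
                      (fun J => J.card = v ∧ I ⊆ J),
                    (if J ⊆ A j then (1 : ZMod p) else 0)})))
      ≤ (n - 1).choose v - (n - 1).choose u := by
  classical
  haveI := Fact.mk hp
  set X : Finset ℕ := Finset.Icc 1 (n - 1) with hX
  have hXcard : X.card = n - 1 := by rw [hX, Nat.card_Icc]; omega
  set L : {J : Finset ℕ // J ∈ X.powersetCard v} → (Fin m → ZMod p) :=
    fun J => fun j => if J.1 ⊆ A j then 1 else 0 with hL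
  set φ : ({J : Finset ℕ // J ∈ X.powersetCard v} → ZMod p) →ₗ[ZMod p] (Fin m → ZMod p) :=
    Fintype.linearCombination (ZMod p) L with hφ
  set NI : {I : Finset ℕ // I ∈ X.powersetCard u} → ({J : Finset ℕ // J ∈ X.powersetCard v} → ZMod p) :=
    fun I => fun J => if I.1 ⊆ J.1 then 1 else 0 with hNI
  -- the numerator span is the range of φ
  have hVset : {w : Fin m → ZMod p | ∃ J : Finset ℕ, J ⊆ X ∧
      J.card = v ∧ w = fun j => if J ⊆ A j then 1 else 0} = Set.range L := by
    ext w
    constructor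
    · rintro ⟨J, hJ1, hJ2, rfl⟩
      exact ⟨⟨J, Finset.mem_powersetCard.2 ⟨hJ1, hJ2⟩⟩, rfl⟩
    · rintro ⟨⟨J, hJ⟩, rfl⟩
      obtain ⟨h1, h2⟩ := Finset.mem_powersetCard.1 hJ
      exact ⟨J, h1, h2, rfl⟩
  have hV : Submodule.span (ZMod p) {w : Fin m → ZMod p | ∃ J : Finset ℕ, J ⊆ X ∧
      J.card = v ∧ w = fun j => if J ⊆ A j then 1 else 0} = LinearMap.range φ := by
    rw [hVset, hφ, Fintype.range_linearCombination]
  -- the denominator generators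
  have hfilter : ∀ I : Finset ℕ, X.powerset.filter (fun J => J.card = v ∧ I ⊆ J)
      = (X.powersetCard v).filter (fun J => I ⊆ J) := by
    intro I
    ext J
    simp only [Finset.mem_filter, Finset.mem_powerset, Finset.mem_powersetCard]
    tauto
  have hWvec : ∀ I : {I : Finset ℕ // I ∈ X.powersetCard u},
      φ (NI I) = fun j => ∑ J ∈ X.powerset.filter (fun J => J.card = v ∧ I.1 ⊆ J),
        (if J ⊆ A j then (1 : ZMod p) else 0) := by
    intro I
    funext j
    rw [hφ, Fintype.linearCombination_apply]
    rw [Finset.sum_apply]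
    rw [hfilter I.1, Finset.sum_filter]
    rw [← Finset.sum_attach (X.powersetCard v)
      (fun J => if I.1 ⊆ J then (if J ⊆ A j then (1 : ZMod p) else 0) else 0)]
    rw [Finset.univ_eq_attach]
    refine Finset.sum_congr rfl fun J _ => ?_
    simp only [hNI, hL, Pi.smul_apply, smul_eq_mul]
    by_cases h : I.1 ⊆ J.1 <;> simp [h]
  have hWset : {w : Fin m → ZMod p | ∃ I : Finset ℕ, I ⊆ X ∧ I.card = u ∧
      w = fun j => ∑ J ∈ X.powerset.filter (fun J => J.card = v ∧ I ⊆ J),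
        (if J ⊆ A j then (1 : ZMod p) else 0)}
      = Set.range (fun I : {I : Finset ℕ // I ∈ X.powersetCard u} => φ (NI I)) := by
    ext w
    constructor
    · rintro ⟨I, hI1, hI2, rfl⟩
      exact ⟨⟨I, Finset.mem_powersetCard.2 ⟨hI1, hI2⟩⟩, hWvec _⟩
    · rintro ⟨I, rfl⟩
      obtain ⟨h1, h2⟩ := Finset.mem_powersetCard.1 I.2
      exact ⟨I.1, h1, h2, hWvec I⟩
  have hW : Submodule.span (ZMod p) {w : Fin m → ZMod p | ∃ I : Finset ℕ, I ⊆ X ∧ I.card = u ∧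
      w = fun j => ∑ J ∈ X.powerset.filter (fun J => J.card = v ∧ I ⊆ J),
        (if J ⊆ A j then (1 : ZMod p) else 0)}
      = Submodule.map φ (Submodule.span (ZMod p) (Set.range NI)) := by
    rw [hWset, Submodule.map_span, ← Set.range_comp]
    rfl
  -- linear independence of the rows NI
  have hNIind : LinearIndependent (ZMod p) NI := by
    rw [Fintype.linearIndependent_iff]
    intro g hg
    set f : Finset ℕ → ZMod p :=
      fun S => if hS : S ∈ X.powersetCard u then g ⟨S, hS⟩ else 0 with hf
    have hkey : ∀ I ∈ X.powersetCard u, f I = 0 := by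
      refine QRC.key p (u + X.card) u v X le_rfl (le_of_lt huv) hvp (by omega) f ?_
      intro J hJ
      have hJX : J ⊆ X := (Finset.mem_powersetCard.1 hJ).1
      have hgJ := congrFun hg ⟨J, hJ⟩
      rw [Finset.sum_apply] at hgJ
      simp only [Pi.zero_apply] at hgJ
      calc QRC.Up u f J
          = ∑ I ∈ (X.powersetCard u).attach, (g I • NI I) ⟨J, hJ⟩ := by
            rw [QRC.Up, QRC.pc_subset_of_subset X J u hJX, Finset.sum_filter,
              ← Finset.sum_attach (X.powersetCard u) (fun I => if I ⊆ J then f I else 0)]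
            refine Finset.sum_congr rfl fun I _ => ?_
            simp only [Pi.smul_apply, smul_eq_mul, hNI, hf]
            rw [dif_pos I.2]
            by_cases h : (I : Finset ℕ) ⊆ J
            · simp [h]
            · simp [h]
        _ = 0 := by rw [← Finset.univ_eq_attach]; exact hgJ
    intro I
    have := hkey I.1 I.2
    rw [hf] at this
    simpa [dif_pos I.2] using this
  -- rank bookkeeping
  set U : Submodule (ZMod p) ({J : Finset ℕ // J ∈ X.powersetCard v} → ZMod p) :=
    Submodule.span (ZMod p) (Set.range NI) with hU
  have hUrank : Module.finrank (ZMod p) U = (n - 1).choose u := by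
    rw [hU, finrank_span_eq_card hNIind]
    rw [Fintype.card_coe, Finset.card_powersetCard, hXcard]
  have hcardι : Module.finrank (ZMod p) ({J : Finset ℕ // J ∈ X.powersetCard v} → ZMod p)
      = (n - 1).choose v := by
    rw [Module.finrank_pi, Fintype.card_coe, Finset.card_powersetCard, hXcard]
  set V := Submodule.span (ZMod p) {w : Fin m → ZMod p | ∃ J : Finset ℕ, J ⊆ X ∧
      J.card = v ∧ w = fun j => if J ⊆ A j then 1 else 0} with hVdef
  set W := Submodule.span (ZMod p) {w : Fin m → ZMod p | ∃ I : Finset ℕ, I ⊆ X ∧ I.card = u ∧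
      w = fun j => ∑ J ∈ X.powerset.filter (fun J => J.card = v ∧ I ⊆ J),
        (if J ⊆ A j then (1 : ZMod p) else 0)} with hWdef
  have hWleV : W ≤ V := by
    rw [hW, hV]
    exact LinearMap.map_le_range
  -- rank computations
  have hq := Submodule.finrank_quotient_add_finrank (Submodule.comap V.subtype W)
  have hcomap : Module.finrank (ZMod p) (Submodule.comap V.subtype W)
      = Module.finrank (ZMod p) W :=
    LinearEquiv.finrank_eq (Submodule.comapSubtypeEquivOfLe hWleV)
  have h1 : Module.finrank (ZMod p) (LinearMap.range φ)
      + Module.finrank (ZMod p) (LinearMap.ker φ) = (n - 1).choose v := by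
    rw [LinearMap.finrank_range_add_finrank_ker φ, hcardι]
  set ρ : U →ₗ[ZMod p] (Fin m → ZMod p) := φ ∘ₗ U.subtype with hρ
  have h2 : Module.finrank (ZMod p) (LinearMap.range ρ)
      + Module.finrank (ZMod p) (LinearMap.ker ρ) = (n - 1).choose u := by
    rw [LinearMap.finrank_range_add_finrank_ker ρ, hUrank]
  have hrangeρ : LinearMap.range ρ = Submodule.map φ U := by
    rw [hρ, LinearMap.range_comp, Submodule.range_subtype]
  have hkerρ : Module.finrank (ZMod p) (LinearMap.ker ρ)
      ≤ Module.finrank (ZMod p) (LinearMap.ker φ) := by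
    have hmem : ∀ x ∈ LinearMap.ker ρ, U.subtype x ∈ LinearMap.ker φ := by
      intro x hx
      rw [LinearMap.mem_ker] at hx ⊢
      exact hx
    have hinj : Function.Injective (U.subtype.restrict hmem) := by
      intro x y hxy
      have h2 := congrArg (Subtype.val) hxy
      simp only [LinearMap.restrict_apply] at h2
      exact Subtype.ext (Submodule.injective_subtype U h2)
    exact LinearMap.finrank_le_finrank_of_injective hinj
  have hVrank : Module.finrank (ZMod p) V ≤ (n - 1).choose v := by
    rw [hV]; omega
  have hWrank : Module.finrank (ZMod p) W
      + Module.finrank (ZMod p) (LinearMap.ker ρ) = (n - 1).choose u := by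
    rw [hW, ← hrangeρ]; exact h2
  have hVrank2 : Module.finrank (ZMod p) V
      + Module.finrank (ZMod p) (LinearMap.ker φ) = (n - 1).choose v := by
    rw [hV]; exact h1
  omega
end

section
/- Let p be a prime, K = {k₁,...,k_r} and L = {l₁,...,l_s} disjoint subsets of {0,...,p-1}, and 𝒜 a family of subsets of [n] with |A| mod p ∈ K for A ∈ 𝒜 and |A∩B| mod p ∈ L for distinct A, B ∈ 𝒜. Suppose p + k₁ - 1 ≤ (s - 2r + 1) + k_r and n ≤ 2s - 2r, where k₁ = min K and k_r = max K, and n ≥ s + k_r. Then |𝒜| ≤ r · C(n, s). -/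
/-! Since `n ≤ 2s - 2r < 2p`, a set of size `≡ k (mod p)` in `[n]` has size `k` or `p + k`,
so each residue class `k ∈ K` contributes at most `C(n, k) + C(n, p + k)` members. By symmetry
this is `C(n, k) + C(n, n - p - k)` with `k + (n - p - k) < n - s ≤ n / 2`, and two binomial
coefficients whose lower indices sum to less than `m ≤ n / 2` are together at most `C(n, m)`. -/

open Finset

namespace Nat

theorem choose_le_choose_of_le_of_two_mul_le {n i j : ℕ} (hij : i ≤ j) (hj : 2 * j ≤ n) :
    n.choose i ≤ n.choose j := by
  induction j, hij using Nat.le_induction with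
  | base => rfl
  | succ j _ ih => exact (ih (by omega)).trans (choose_le_succ_of_lt_half_left (by omega))

theorem choose_lt_choose_of_lt_of_two_mul_le {n i j : ℕ} (hij : i < j) (hj : 2 * j ≤ n) :
    n.choose i < n.choose j := by
  obtain ⟨j, rfl⟩ : ∃ j', j = j' + 1 := ⟨j - 1, by omega⟩
  refine (choose_le_choose_of_le_of_two_mul_le (by omega : i ≤ j) (by omega)).trans_lt ?_
  have hpos : 0 < n.choose j := choose_pos (by omega)
  refine Nat.lt_of_mul_lt_mul_right (a := j + 1) ?_
  calc n.choose j * (j + 1) < n.choose j * (n - j) := Nat.mul_lt_mul_of_pos_left (by omega) hpos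
    _ = n.choose (j + 1) * (j + 1) := (choose_succ_right_eq n j).symm

theorem choose_add_choose_le_choose {n a b m : ℕ} (hab : a + b < m) (hm : 2 * m ≤ n) :
    n.choose a + n.choose b ≤ n.choose m := by
  induction n generalizing a b m with
  | zero => omega
  | succ n ih =>
    obtain ⟨m, rfl⟩ : ∃ m', m = m' + 1 := ⟨m - 1, by omega⟩
    rcases a with _ | a
    · have := choose_lt_choose_of_lt_of_two_mul_le (by omega : b < m + 1) hm
      rw [choose_zero_right]; omega
    rcases b with _ | b
    · have := choose_lt_choose_of_lt_of_two_mul_le (by omega : a + 1 < m + 1) hm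
      rw [choose_zero_right]; omega
    rw [choose_succ_succ' n a, choose_succ_succ' n b, choose_succ_succ' n m]
    rcases le_or_gt (2 * (m + 1)) n with hle | hgt
    · have := ih (by omega : a + b < m) (by omega)
      have := ih (by omega : a + 1 + (b + 1) < m + 1) hle
      omega
    · -- `n = 2m + 1`: the top row is symmetric about the middle, so pair `a` with `b + 1`.
      obtain rfl : n = 2 * m + 1 := by omega
      have := ih (by omega : a + (b + 1) < m) (by omega)
      have := ih (by omega : a + 1 + b < m) (by omega)
      rw [choose_symm_half]
      omega

theorem choose_add_choose_add_le_choose {n s p k : ℕ} (hsp : s < p) (hks : k + s ≤ n)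
    (hn : n ≤ 2 * s) : n.choose k + n.choose (p + k) ≤ n.choose s := by
  rw [← choose_symm (by omega : s ≤ n)]
  rcases le_or_gt (p + k) n with hle | hlt
  · rw [← choose_symm hle]
    exact choose_add_choose_le_choose (by omega) (by omega)
  · rw [choose_eq_zero_of_lt hlt, add_zero]
    exact choose_le_choose_of_le_of_two_mul_le (by omega) (by omega)

end Nat

theorem Finset.card_le_choose_add_choose_of_card_mod_eq {α : Type*} [DecidableEq α]
    {U : Finset α} {𝒜 : Finset (Finset α)} {p k : ℕ} (hU : #U < 2 * p)
    (hsub : ∀ A ∈ 𝒜, A ⊆ U) (hmod : ∀ A ∈ 𝒜, #A % p = k) :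
    #𝒜 ≤ (#U).choose k + (#U).choose (p + k) := by
  have h𝒜 : 𝒜 ⊆ U.powersetCard k ∪ U.powersetCard (p + k) := by
    intro A hA
    have hAU := hsub A hA
    have hA : #A = k ∨ #A = p + k := by
      have := card_le_card hAU
      have := Nat.mod_add_div #A p
      rw [hmod A hA] at this
      have : #A / p < 2 := Nat.div_lt_of_lt_mul (by omega)
      interval_cases #A / p <;> omega
    rcases hA with hA | hA
    · exact mem_union_left _ (mem_powersetCard.mpr ⟨hAU, hA⟩)
    · exact mem_union_right _ (mem_powersetCard.mpr ⟨hAU, hA⟩)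
  calc #𝒜 ≤ #(U.powersetCard k ∪ U.powersetCard (p + k)) := card_le_card h𝒜
    _ ≤ #(U.powersetCard k) + #(U.powersetCard (p + k)) := card_union_le _ _
    _ = (#U).choose k + (#U).choose (p + k) := by rw [card_powersetCard, card_powersetCard]

theorem stmt14_general (p n r s : ℕ) (K L : Finset ℕ) (hKne : K.Nonempty)
    (hK : K ⊆ Finset.range p) (hL : L ⊆ Finset.range p) (hdisj : Disjoint K L)
    (hKr : K.card = r) (hLs : L.card = s)
    (𝒜 : Finset (Finset ℕ)) (hsub : ∀ A ∈ 𝒜, A ⊆ Finset.Icc 1 n)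
    (hsize : ∀ A ∈ 𝒜, A.card % p ∈ K)
    (h2 : (n : ℤ) ≤ 2 * s - 2 * r)
    (h3 : n ≥ s + K.max' hKne) :
    𝒜.card ≤ r * n.choose s := by
  have hr : 0 < r := hKr ▸ card_pos.mpr hKne
  have hrs : r + s ≤ p := by
    have := card_le_card (union_subset hK hL)
    rwa [card_union_of_disjoint hdisj, hKr, hLs, card_range] at this
  have hn : n + 2 * r ≤ 2 * s := by omega
  have hfiber : ∀ k ∈ K, #{A ∈ 𝒜 | #A % p = k} ≤ n.choose s := fun k hk => by
    have hk := K.le_max' k hk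
    have := card_le_choose_add_choose_of_card_mod_eq (U := Icc 1 n) (p := p) (k := k)
      (by rw [Nat.card_Icc]; omega) (fun A hA => hsub A (mem_filter.1 hA).1)
      (fun A hA => (mem_filter.1 hA).2)
    rw [Nat.card_Icc, Nat.add_sub_cancel] at this
    exact this.trans (Nat.choose_add_choose_add_le_choose (by omega) (by omega) (by omega))
  calc #𝒜 ≤ n.choose s * #K := card_le_mul_card_image_of_maps_to hsize _ hfiber
    _ = r * n.choose s := by rw [hKr, mul_comm]

/-- Case 4 of the main proof: if `p + k₁ - 1 ≤ (s - 2r + 1) + k_r`, `n ≤ 2s - 2r` and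
`n ≥ s + k_r`, then a mod-`p` `L`-intersecting family with sizes mod `p` in `K`
satisfies `|𝒜| ≤ r·C(n,s)`. -/
theorem stmt14 (p n r s : ℕ) (hp : p.Prime) (K L : Finset ℕ) (hKne : K.Nonempty)
    (hK : K ⊆ Finset.range p) (hL : L ⊆ Finset.range p) (hdisj : Disjoint K L)
    (hKr : K.card = r) (hLs : L.card = s)
    (𝒜 : Finset (Finset ℕ)) (hsub : ∀ A ∈ 𝒜, A ⊆ Finset.Icc 1 n)
    (hsize : ∀ A ∈ 𝒜, A.card % p ∈ K)
    (hint : ∀ A ∈ 𝒜, ∀ B ∈ 𝒜, A ≠ B → (A ∩ B).card % p ∈ L)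
    (h1 : (p : ℤ) + K.min' hKne - 1 ≤ (s : ℤ) - 2 * r + 1 + K.max' hKne)
    (h2 : (n : ℤ) ≤ 2 * s - 2 * r)
    (h3 : n ≥ s + K.max' hKne) :
    𝒜.card ≤ r * n.choose s :=
  stmt14_general p n r s K L hKne hK hL hdisj hKr hLs 𝒜 hsub hsize h2 h3
end
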